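/- arXiv:2511.05940 — 3 statements merged into one kernel-verified Lean document; each statement's English description precedes it below -/
import Mathlib

section
/- Li–Yau inequality for heat-kernel convolutions: let u_0 be a probability measure on ℝ^d and u(x,t) = (G_t * u_0)(x). Then for every (x,t) ∈ ℝ^d × (0,∞), Δ log u(x,t) ≥ -d/(2t), equivalently div(∇ log u)(x,t) ≥ -d/(2t). -/
open MeasureTheory Real Set

noncomputable def heatKernel (d : ℕ) (t : ℝ) (x : EuclideanSpace ℝ (Fin d)) : ℝ :=
  (4 * π * t) ^ (-(d : ℝ) / 2) * Real.exp (-‖x‖ ^ 2 / (4 * t))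

noncomputable def heatFlow (d : ℕ) (μ : Measure (EuclideanSpace ℝ (Fin d)))
    (x : EuclideanSpace ℝ (Fin d)) (t : ℝ) : ℝ :=
  ∫ y, heatKernel d t (x - y) ∂μ

/-- The Laplacian of a scalar function on `ℝ^d`, as the sum of the second partial
derivatives in the coordinate directions. -/
noncomputable def lap (d : ℕ) (f : EuclideanSpace ℝ (Fin d) → ℝ)
    (x : EuclideanSpace ℝ (Fin d)) : ℝ :=
  ∑ i : Fin d,
    fderiv ℝ (fun z => fderiv ℝ f z (EuclideanSpace.single i (1 : ℝ))) x
      (EuclideanSpace.single i (1 : ℝ))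


open MeasureTheory Real Set

noncomputable def innerCLM (d : ℕ) :
    EuclideanSpace ℝ (Fin d) →L[ℝ] (EuclideanSpace ℝ (Fin d) →L[ℝ] ℝ) :=
  LinearMap.mkContinuous
    { toFun := fun z => innerSL ℝ z
      map_add' := fun z w => by ext v; simp [inner_add_left]
      map_smul' := fun r z => by ext v; simp [real_inner_smul_left] }
    1 (fun z => by simp [innerSL_apply_norm])

@[simp] lemma innerCLM_apply (d : ℕ) (z v : EuclideanSpace ℝ (Fin d)) :
    innerCLM d z v = inner ℝ z v := rfl

noncomputable def gK (d : ℕ) (a c : ℝ) (z : EuclideanSpace ℝ (Fin d)) : ℝ :=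
  c * Real.exp (-(a * ‖z‖ ^ 2))

noncomputable def gK1 (d : ℕ) (a c : ℝ) (z : EuclideanSpace ℝ (Fin d)) :
    EuclideanSpace ℝ (Fin d) →L[ℝ] ℝ :=
  (-(2 * a) * gK d a c z) • innerCLM d z

noncomputable def gK2 (d : ℕ) (a c : ℝ) (z : EuclideanSpace ℝ (Fin d)) :
    EuclideanSpace ℝ (Fin d) →L[ℝ] EuclideanSpace ℝ (Fin d) →L[ℝ] ℝ :=
  (-(2 * a) * gK d a c z) • (innerCLM d) +
    ((4 * a ^ 2 * gK d a c z) • innerCLM d z).smulRight (innerCLM d z)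

lemma hasFDerivAt_gK (d : ℕ) (a c : ℝ) (z : EuclideanSpace ℝ (Fin d)) :
    HasFDerivAt (gK d a c) (gK1 d a c z) z := by
  have h0 : HasFDerivAt (fun z : EuclideanSpace ℝ (Fin d) => ‖z‖ ^ 2)
      (2 • innerSL ℝ z) z := (hasStrictFDerivAt_norm_sq z).hasFDerivAt
  have h1 := ((h0.const_mul a).neg.exp).const_mul c
  refine h1.congr_fderiv ?_
  ext v
  simp [gK, gK1]
  ring

lemma hasFDerivAt_gK1 (d : ℕ) (a c : ℝ) (z : EuclideanSpace ℝ (Fin d)) :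
    HasFDerivAt (gK1 d a c) (gK2 d a c z) z := by
  have hs : HasFDerivAt (fun z : EuclideanSpace ℝ (Fin d) => -(2 * a) * gK d a c z)
      ((-(2 * a)) • gK1 d a c z) z := ((hasFDerivAt_gK d a c z).const_mul (-(2 * a)))
  have hl : HasFDerivAt (fun z : EuclideanSpace ℝ (Fin d) => innerCLM d z)
      (innerCLM d) z := (innerCLM d).hasFDerivAt
  have := hs.smul hl
  refine this.congr_fderiv ?_
  ext v w
  simp [gK2, gK1]
  left; ring

lemma continuous_gK (d : ℕ) (a c : ℝ) : Continuous (gK d a c) := by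
  unfold gK; fun_prop

lemma continuous_gK1 (d : ℕ) (a c : ℝ) : Continuous (gK1 d a c) := by
  unfold gK1
  have h := continuous_gK d a c
  have h2 := (innerCLM d).continuous
  fun_prop

set_option synthInstance.maxHeartbeats 1000000 in
lemma continuous_gK2 (d : ℕ) (a c : ℝ) : Continuous (gK2 d a c) := by
  unfold gK2
  have h := continuous_gK d a c
  have h2 := (innerCLM d).continuous
  have h1 : Continuous fun z : EuclideanSpace ℝ (Fin d) =>
      (4 * a ^ 2 * gK d a c z) • innerCLM d z := by fun_prop
  have h3 : Continuous fun z : EuclideanSpace ℝ (Fin d) =>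
      ((4 * a ^ 2 * gK d a c z) • innerCLM d z).smulRight (innerCLM d z) :=
    (ContinuousLinearMap.smulRightL ℝ (EuclideanSpace ℝ (Fin d))
      (EuclideanSpace ℝ (Fin d) →L[ℝ] ℝ)).continuous₂.comp₂ h1 h2
  haveI := (ContinuousLinearMap.topologicalAddGroup (σ := RingHom.id ℝ) (E := EuclideanSpace ℝ (Fin d))
    (F := EuclideanSpace ℝ (Fin d) →L[ℝ] ℝ)).toContinuousAdd
  exact ((continuous_const.mul h).smul continuous_const).add h3


lemma gK_pos {d : ℕ} {a c : ℝ} (hc : 0 < c) (z : EuclideanSpace ℝ (Fin d)) :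
    0 < gK d a c z := mul_pos hc (Real.exp_pos _)

lemma sqrt_le_exp {y : ℝ} (hy : 0 ≤ y) : Real.sqrt y ≤ Real.exp y := by
  have h1 : Real.sqrt y ≤ 1 + y := by
    nlinarith [Real.sq_sqrt hy, Real.sqrt_nonneg y, sq_nonneg (Real.sqrt y - 1)]
  linarith [Real.add_one_le_exp y]

lemma aux_bound1 {a s : ℝ} (ha : 0 < a) (hs : 0 ≤ s) :
    s * Real.exp (-(a * s ^ 2)) ≤ (Real.sqrt a)⁻¹ := by
  have hsa : 0 < Real.sqrt a := Real.sqrt_pos.2 ha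
  have key : Real.sqrt a * s ≤ Real.exp (a * s ^ 2) := by
    have h1 : Real.sqrt a * s = Real.sqrt (a * s ^ 2) := by
      rw [Real.sqrt_mul ha.le, Real.sqrt_sq hs]
    rw [h1]
    exact sqrt_le_exp (by positivity)
  calc s * Real.exp (-(a * s ^ 2))
      = (Real.sqrt a)⁻¹ * ((Real.sqrt a * s) * Real.exp (-(a * s ^ 2))) := by
        field_simp
    _ ≤ (Real.sqrt a)⁻¹ * (Real.exp (a * s ^ 2) * Real.exp (-(a * s ^ 2))) := by
        gcongr
    _ = (Real.sqrt a)⁻¹ := by rw [← Real.exp_add]; simp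

lemma aux_bound2 {a s : ℝ} (ha : 0 < a) :
    s ^ 2 * Real.exp (-(a * s ^ 2)) ≤ a⁻¹ := by
  have key : a * s ^ 2 ≤ Real.exp (a * s ^ 2) := by
    linarith [Real.add_one_le_exp (a * s ^ 2)]
  calc s ^ 2 * Real.exp (-(a * s ^ 2))
      = a⁻¹ * ((a * s ^ 2) * Real.exp (-(a * s ^ 2))) := by field_simp
    _ ≤ a⁻¹ * (Real.exp (a * s ^ 2) * Real.exp (-(a * s ^ 2))) := by
        gcongr
    _ = a⁻¹ := by rw [← Real.exp_add]; simp

lemma norm_innerCLM_apply {d : ℕ} (z : EuclideanSpace ℝ (Fin d)) :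
    ‖innerCLM d z‖ = ‖z‖ := innerSL_apply_norm ℝ z

lemma norm_innerCLM_le (d : ℕ) : ‖innerCLM d‖ ≤ 1 :=
  LinearMap.mkContinuous_norm_le _ zero_le_one _

lemma norm_gK_le {d : ℕ} {a c : ℝ} (ha : 0 < a) (hc : 0 < c) (z : EuclideanSpace ℝ (Fin d)) :
    ‖gK d a c z‖ ≤ c := by
  rw [Real.norm_eq_abs, abs_of_pos (gK_pos hc z)]
  unfold gK
  nlinarith [Real.exp_le_one_iff.2 (neg_nonpos.2 (by positivity : (0:ℝ) ≤ a * ‖z‖ ^ 2)),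
    Real.exp_pos (-(a * ‖z‖ ^ 2))]

lemma norm_gK1_le {d : ℕ} {a c : ℝ} (ha : 0 < a) (hc : 0 < c)
    (z : EuclideanSpace ℝ (Fin d)) :
    ‖gK1 d a c z‖ ≤ 2 * a * c * (Real.sqrt a)⁻¹ := by
  have hg := gK_pos (a := a) hc z
  unfold gK1
  rw [norm_smul (-(2 * a) * gK d a c z) (innerCLM d z), norm_innerCLM_apply,
    Real.norm_eq_abs]
  have h1 : |(-(2 * a) * gK d a c z)| = 2 * a * gK d a c z := by
    rw [abs_of_nonpos (by nlinarith)]; ring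
  rw [h1]
  have h2 : 2 * a * gK d a c z * ‖z‖ = 2 * a * c * (‖z‖ * Real.exp (-(a * ‖z‖ ^ 2))) := by
    unfold gK; ring
  rw [h2]
  exact mul_le_mul_of_nonneg_left (aux_bound1 ha (norm_nonneg z)) (by positivity)

lemma norm_gK2_le {d : ℕ} {a c : ℝ} (ha : 0 < a) (hc : 0 < c)
    (z : EuclideanSpace ℝ (Fin d)) :
    ‖gK2 d a c z‖ ≤ 2 * a * c + 4 * a * c := by
  have hg := gK_pos (a := a) hc z
  have hE0 := Real.exp_pos (-(a * ‖z‖ ^ 2))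
  have hE1 : Real.exp (-(a * ‖z‖ ^ 2)) ≤ 1 :=
    Real.exp_le_one_iff.2 (neg_nonpos.2 (by positivity))
  have hb2 := aux_bound2 (a := a) (s := ‖z‖) ha
  unfold gK2
  refine (norm_add_le ((-(2 * a) * gK d a c z) • (innerCLM d))
    (((4 * a ^ 2 * gK d a c z) • innerCLM d z).smulRight (innerCLM d z))).trans ?_
  have hA : ‖(-(2 * a) * gK d a c z) • (innerCLM d)‖ ≤ 2 * a * c := by
    refine ContinuousLinearMap.opNorm_le_bound _ (by positivity) fun v => ?_
    rw [ContinuousLinearMap.smul_apply, norm_smul (-(2 * a) * gK d a c z) (innerCLM d v),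
      Real.norm_eq_abs, norm_innerCLM_apply]
    have h1 : |(-(2 * a) * gK d a c z)| = 2 * a * c * Real.exp (-(a * ‖z‖ ^ 2)) := by
      rw [abs_of_nonpos (by nlinarith)]; unfold gK; ring
    rw [h1]
    have h3 := mul_le_mul_of_nonneg_left hE1 (by positivity : (0:ℝ) ≤ 2 * a * c)
    exact mul_le_mul_of_nonneg_right (by linarith) (norm_nonneg v)
  have hB : ‖((4 * a ^ 2 * gK d a c z) • innerCLM d z).smulRight (innerCLM d z)‖
      ≤ 4 * a * c := by
    refine ContinuousLinearMap.opNorm_le_bound _ (by positivity) fun v => ?_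
    rw [ContinuousLinearMap.smulRight_apply, ContinuousLinearMap.smul_apply]
    have e0 : ((4 * a ^ 2 * gK d a c z) • innerCLM d z v) • innerCLM d z
        = (4 * a ^ 2 * gK d a c z * (innerCLM d z v)) • innerCLM d z := by
      rw [smul_eq_mul]
    rw [e0, norm_smul (4 * a ^ 2 * gK d a c z * (innerCLM d z v)) (innerCLM d z),
      Real.norm_eq_abs, norm_innerCLM_apply]
    have hi : |innerCLM d z v| ≤ ‖z‖ * ‖v‖ := by
      rw [innerCLM_apply]
      exact abs_real_inner_le_norm z v
    have h1 : |4 * a ^ 2 * gK d a c z * (innerCLM d z v)|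
        = 4 * a ^ 2 * c * Real.exp (-(a * ‖z‖ ^ 2)) * |innerCLM d z v| := by
      rw [abs_mul, abs_of_pos (by nlinarith [mul_pos (pow_pos ha 2) hg])]; unfold gK; ring
    rw [h1]
    set E := Real.exp (-(a * ‖z‖ ^ 2)) with hE
    have e1 : 4 * a ^ 2 * c * E * |innerCLM d z v| * ‖z‖
        ≤ 4 * a ^ 2 * c * E * (‖z‖ * ‖v‖) * ‖z‖ :=
      mul_le_mul_of_nonneg_right (mul_le_mul_of_nonneg_left hi (by positivity))
        (norm_nonneg z)
    have e2 : 4 * a ^ 2 * c * E * (‖z‖ * ‖v‖) * ‖z‖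
        = 4 * a ^ 2 * c * (‖z‖ ^ 2 * E) * ‖v‖ := by ring
    have e3 : 4 * a ^ 2 * c * (‖z‖ ^ 2 * E) * ‖v‖ ≤ 4 * a ^ 2 * c * a⁻¹ * ‖v‖ :=
      mul_le_mul_of_nonneg_right (mul_le_mul_of_nonneg_left hb2 (by positivity))
        (norm_nonneg v)
    have e4 : 4 * a ^ 2 * c * a⁻¹ = 4 * a * c := by field_simp
    have e5 : 4 * a ^ 2 * c * a⁻¹ * ‖v‖ = 4 * a * c * ‖v‖ := by rw [e4]
    linarith [e1, e3, e5, e2.le, e2.ge]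
  linarith

section IntegralLayer

variable {d : ℕ} {μ : Measure (EuclideanSpace ℝ (Fin d))} [IsProbabilityMeasure μ]

lemma integrable_bdd {F : Type*} [NormedAddCommGroup F] {f : EuclideanSpace ℝ (Fin d) → F}
    (hf : Continuous f) {C : ℝ} (hC : ∀ z, ‖f z‖ ≤ C) : Integrable f μ :=
  (integrable_const C).mono' hf.aestronglyMeasurable (Filter.Eventually.of_forall hC)

lemma hasFDerivAt_heatU (a c : ℝ) (ha : 0 < a) (hc : 0 < c)
    (x : EuclideanSpace ℝ (Fin d)) :
    HasFDerivAt (fun x => ∫ y, gK d a c (x - y) ∂μ)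
      (∫ y, gK1 d a c (x - y) ∂μ) x := by
  have hgc := continuous_gK d a c
  have hg1c := continuous_gK1 d a c
  apply hasFDerivAt_integral_of_dominated_of_fderiv_le
      (F' := fun x y => gK1 d a c (x - y))
      (bound := fun _ => 2 * a * c * (Real.sqrt a)⁻¹) (s := Set.univ) Filter.univ_mem
  · exact Filter.Eventually.of_forall fun x' =>
      (hgc.comp (continuous_const.sub continuous_id)).aestronglyMeasurable
  · exact integrable_bdd (hgc.comp (continuous_const.sub continuous_id))
      fun y => norm_gK_le ha hc _
  · exact (hg1c.comp (continuous_const.sub continuous_id)).aestronglyMeasurable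
  · exact Filter.Eventually.of_forall fun y x' _ => norm_gK1_le ha hc _
  · exact integrable_const _
  · refine Filter.Eventually.of_forall fun y x' _ => ?_
    have h := (hasFDerivAt_gK d a c (x' - y)).comp x' ((hasFDerivAt_id x').sub_const y)
    simpa [Function.comp_def] using h

set_option synthInstance.maxHeartbeats 1000000 in
lemma hasFDerivAt_heatU1 (a c : ℝ) (ha : 0 < a) (hc : 0 < c)
    (x : EuclideanSpace ℝ (Fin d)) :
    HasFDerivAt (fun x => ∫ y, gK1 d a c (x - y) ∂μ)
      (∫ y, gK2 d a c (x - y) ∂μ) x := by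
  have hg1c := continuous_gK1 d a c
  have hg2c := continuous_gK2 d a c
  apply hasFDerivAt_integral_of_dominated_of_fderiv_le
      (F' := fun x y => gK2 d a c (x - y))
      (bound := fun _ => 2 * a * c + 4 * a * c) (s := Set.univ) Filter.univ_mem
  · exact Filter.Eventually.of_forall fun x' =>
      (hg1c.comp (continuous_const.sub continuous_id)).aestronglyMeasurable
  · exact integrable_bdd (hg1c.comp (continuous_const.sub continuous_id))
      fun y => norm_gK1_le ha hc _
  · exact (hg2c.comp (continuous_const.sub continuous_id)).aestronglyMeasurable
  · exact Filter.Eventually.of_forall fun y x' _ => norm_gK2_le ha hc _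
  · exact integrable_const _
  · refine Filter.Eventually.of_forall fun y x' _ => ?_
    have h := (hasFDerivAt_gK1 d a c (x' - y)).comp x' ((hasFDerivAt_id x').sub_const y)
    simpa [Function.comp_def] using h

end IntegralLayer

lemma cauchy_schwarz_int {α : Type*} [MeasurableSpace α] {μ : Measure α} {f g : α → ℝ}
    (hg_nonneg : ∀ y, 0 ≤ g y) (hv : 0 < ∫ y, g y ∂μ) (hg : Integrable g μ)
    (hfg : Integrable (fun y => f y * g y) μ)
    (hf2g : Integrable (fun y => f y ^ 2 * g y) μ) :
    (∫ y, f y * g y ∂μ) ^ 2 ≤ (∫ y, g y ∂μ) * ∫ y, f y ^ 2 * g y ∂μ := by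
  set v := ∫ y, g y ∂μ with hvdef
  set p := ∫ y, f y * g y ∂μ with hpdef
  set q := ∫ y, f y ^ 2 * g y ∂μ with hqdef
  have t1 : Integrable (fun y => v ^ 2 * (f y ^ 2 * g y)) μ := hf2g.const_mul _
  have t2 : Integrable (fun y => 2 * v * p * (f y * g y)) μ := hfg.const_mul _
  have t3 : Integrable (fun y => p ^ 2 * g y) μ := hg.const_mul _
  have expand : ∫ y, (f y * v - p) ^ 2 * g y ∂μ = q * v ^ 2 - 2 * v * p * p + p ^ 2 * v := by
    have hfun : (fun y => (f y * v - p) ^ 2 * g y)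
        = fun y => v ^ 2 * (f y ^ 2 * g y) - 2 * v * p * (f y * g y) + p ^ 2 * g y := by
      funext y; ring
    have t12 : Integrable (fun y => v ^ 2 * (f y ^ 2 * g y) - 2 * v * p * (f y * g y)) μ :=
      t1.sub t2
    rw [hfun, integral_add t12 t3, integral_sub t1 t2,
      integral_const_mul, integral_const_mul, integral_const_mul]
    rw [← hpdef, ← hqdef, ← hvdef]
    ring
  have pos : 0 ≤ ∫ y, (f y * v - p) ^ 2 * g y ∂μ :=
    integral_nonneg fun y => mul_nonneg (sq_nonneg _) (hg_nonneg y)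
  nlinarith [pos, expand, hv]

theorem li_yau_inequality (d : ℕ)
    (μ : Measure (EuclideanSpace ℝ (Fin d))) [IsProbabilityMeasure μ]
    (x : EuclideanSpace ℝ (Fin d)) (t : ℝ) (ht : 0 < t) :
    lap d (fun z => Real.log (heatFlow d μ z t)) x ≥ -(d : ℝ) / (2 * t) := by
  have hπ := Real.pi_pos
  set a : ℝ := (4 * t)⁻¹ with ha_def
  have ha : 0 < a := by positivity
  set c : ℝ := (4 * π * t) ^ (-(d : ℝ) / 2) with hc_def
  have hc : 0 < c := Real.rpow_pos_of_pos (by positivity) _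
  set u : EuclideanSpace ℝ (Fin d) → ℝ := fun z => ∫ y, gK d a c (z - y) ∂μ with hu_def
  set U1 : EuclideanSpace ℝ (Fin d) → (EuclideanSpace ℝ (Fin d) →L[ℝ] ℝ) :=
    fun z => ∫ y, gK1 d a c (z - y) ∂μ with hU1_def
  set U2 : EuclideanSpace ℝ (Fin d) →
      (EuclideanSpace ℝ (Fin d) →L[ℝ] (EuclideanSpace ℝ (Fin d) →L[ℝ] ℝ)) :=
    fun z => ∫ y, gK2 d a c (z - y) ∂μ with hU2_def
  have hker : ∀ w : EuclideanSpace ℝ (Fin d), heatKernel d t w = gK d a c w := by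
    intro w
    unfold heatKernel gK
    have h1 : -‖w‖ ^ 2 / (4 * t) = -(a * ‖w‖ ^ 2) := by rw [ha_def]; field_simp
    rw [h1, ← hc_def]
  have hflow : ∀ z, heatFlow d μ z t = u z := by
    intro z
    unfold heatFlow
    simp only [hker]
    rfl
  have csub : ∀ z : EuclideanSpace ℝ (Fin d),
      Continuous fun y : EuclideanSpace ℝ (Fin d) => z - y :=
    fun z => continuous_const.sub continuous_id
  have int_g : ∀ z, Integrable (fun y => gK d a c (z - y)) μ := fun z =>
    integrable_bdd ((continuous_gK d a c).comp (csub z)) fun y => norm_gK_le ha hc _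
  have int_g1 : ∀ z, Integrable (fun y => gK1 d a c (z - y)) μ := fun z =>
    integrable_bdd ((continuous_gK1 d a c).comp (csub z)) fun y => norm_gK1_le ha hc _
  have int_g2 : ∀ z, @Integrable _ _ SeminormedAddGroup.toContinuousENorm _ _ (fun y => gK2 d a c (z - y)) μ := fun z =>
    integrable_bdd (F := EuclideanSpace ℝ (Fin d) →L[ℝ] EuclideanSpace ℝ (Fin d) →L[ℝ] ℝ)
      ((continuous_gK2 d a c).comp (csub z)) fun y => norm_gK2_le ha hc _
  have hupos : ∀ z, 0 < u z := by
    intro z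
    have hnn : 0 ≤ fun y => gK d a c (z - y) := fun y => (gK_pos hc _).le
    have := (integral_pos_iff_support_of_nonneg hnn (int_g z)).2
    refine this ?_
    have hs : Function.support (fun y => gK d a c (z - y)) = Set.univ := by
      ext y
      simp [Function.mem_support, (gK_pos (a := a) hc (z - y)).ne']
    rw [hs]
    simp
  have hU : ∀ z, HasFDerivAt u (U1 z) z := fun z => hasFDerivAt_heatU a c ha hc z
  have hU1d : ∀ z, HasFDerivAt U1 (U2 z) z := fun z => hasFDerivAt_heatU1 a c ha hc z
  have hlog : ∀ z, HasFDerivAt (fun z => Real.log (u z)) ((u z)⁻¹ • U1 z) z :=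
    fun z => (hU z).log (hupos z).ne'
  have hfun : (fun z => Real.log (heatFlow d μ z t)) = fun z => Real.log (u z) :=
    funext fun z => by rw [hflow z]
  rw [hfun]
  unfold lap
  have hgrad : ∀ i : Fin d,
      (fun z => fderiv ℝ (fun z' => Real.log (u z')) z (EuclideanSpace.single i (1 : ℝ)))
        = fun z => (u z)⁻¹ * U1 z (EuclideanSpace.single i (1 : ℝ)) := by
    intro i
    funext z
    rw [(hlog z).fderiv]
    simp
  have hsecond : ∀ i : Fin d,
      fderiv ℝ (fun z => (u z)⁻¹ * U1 z (EuclideanSpace.single i (1 : ℝ))) x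
          (EuclideanSpace.single i (1 : ℝ))
        = (u x)⁻¹ * U2 x (EuclideanSpace.single i (1 : ℝ)) (EuclideanSpace.single i (1 : ℝ))
          - ((u x) ^ 2)⁻¹ * (U1 x (EuclideanSpace.single i (1 : ℝ))) ^ 2 := by
    intro i
    have p1 : HasFDerivAt (fun z => (u z)⁻¹)
        ((ContinuousLinearMap.smulRight (1 : ℝ →L[ℝ] ℝ) (-((u x) ^ 2)⁻¹)).comp (U1 x)) x :=
      (hasFDerivAt_inv (hupos x).ne').comp x (hU x)
    have p2 : HasFDerivAt (fun z => U1 z (EuclideanSpace.single i (1 : ℝ)))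
        ((ContinuousLinearMap.apply ℝ ℝ (EuclideanSpace.single i (1 : ℝ))).comp (U2 x)) x :=
      ((ContinuousLinearMap.apply ℝ ℝ (EuclideanSpace.single i (1 : ℝ))).hasFDerivAt).comp
        x (hU1d x)
    have hm : HasFDerivAt (fun z => (u z)⁻¹ * U1 z (EuclideanSpace.single i (1 : ℝ))) _ x :=
      p1.mul p2
    rw [hm.fderiv]
    simp [ContinuousLinearMap.smulRight_apply]
    ring
  have hkey : ∀ i : Fin d,
      -(2 * a) ≤ fderiv ℝ (fun z =>
          fderiv ℝ (fun z' => Real.log (u z')) z (EuclideanSpace.single i (1 : ℝ))) x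
        (EuclideanSpace.single i (1 : ℝ)) := by
    intro i
    rw [hgrad i, hsecond i]
    set ei := EuclideanSpace.single i (1 : ℝ) with hei
    have hei_norm : ‖ei‖ = 1 := by
      rw [hei, EuclideanSpace.norm_single]
      norm_num
    have cf : Continuous fun y => (inner ℝ (x - y) ei : ℝ) :=
      (csub x).inner continuous_const
    have habs : ∀ y, |(inner ℝ (x - y) ei : ℝ)| ≤ ‖x - y‖ := by
      intro y
      have h := abs_real_inner_le_norm (x - y) ei
      rwa [hei_norm, mul_one] at h
    have bfg : ∀ y, ‖(inner ℝ (x - y) ei : ℝ) * gK d a c (x - y)‖ ≤ c * (Real.sqrt a)⁻¹ := by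
      intro y
      rw [Real.norm_eq_abs, abs_mul, abs_of_pos (gK_pos hc _)]
      calc |(inner ℝ (x - y) ei : ℝ)| * gK d a c (x - y)
          ≤ ‖x - y‖ * gK d a c (x - y) :=
            mul_le_mul_of_nonneg_right (habs y) (gK_pos hc _).le
        _ = c * (‖x - y‖ * Real.exp (-(a * ‖x - y‖ ^ 2))) := by unfold gK; ring
        _ ≤ c * (Real.sqrt a)⁻¹ :=
            mul_le_mul_of_nonneg_left (aux_bound1 ha (norm_nonneg _)) hc.le
    have bf2g : ∀ y, ‖(inner ℝ (x - y) ei : ℝ) ^ 2 * gK d a c (x - y)‖ ≤ c * a⁻¹ := by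
      intro y
      rw [Real.norm_eq_abs, abs_mul, abs_of_pos (gK_pos hc _)]
      have h1 : |(inner ℝ (x - y) ei : ℝ) ^ 2| ≤ ‖x - y‖ ^ 2 := by
        calc |(inner ℝ (x - y) ei : ℝ) ^ 2| = |(inner ℝ (x - y) ei : ℝ)| ^ 2 := abs_pow _ 2
          _ ≤ ‖x - y‖ ^ 2 := pow_le_pow_left₀ (abs_nonneg _) (habs y) 2
      calc |(inner ℝ (x - y) ei : ℝ) ^ 2| * gK d a c (x - y)
          ≤ ‖x - y‖ ^ 2 * gK d a c (x - y) :=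
            mul_le_mul_of_nonneg_right h1 (gK_pos hc _).le
        _ = c * (‖x - y‖ ^ 2 * Real.exp (-(a * ‖x - y‖ ^ 2))) := by unfold gK; ring
        _ ≤ c * a⁻¹ := mul_le_mul_of_nonneg_left (aux_bound2 ha) hc.le
    have int_fg : Integrable (fun y => (inner ℝ (x - y) ei : ℝ) * gK d a c (x - y)) μ :=
      integrable_bdd (cf.mul ((continuous_gK d a c).comp (csub x))) bfg
    have int_f2g : Integrable (fun y => (inner ℝ (x - y) ei : ℝ) ^ 2 * gK d a c (x - y)) μ :=
      integrable_bdd ((cf.pow 2).mul ((continuous_gK d a c).comp (csub x))) bf2g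
    set p := ∫ y, (inner ℝ (x - y) ei : ℝ) * gK d a c (x - y) ∂μ with hp_def
    set q := ∫ y, (inner ℝ (x - y) ei : ℝ) ^ 2 * gK d a c (x - y) ∂μ with hq_def
    have hU1v : U1 x ei = -(2 * a) * p := by
      rw [hU1_def]
      rw [ContinuousLinearMap.integral_apply (int_g1 x)]
      rw [show (fun y => gK1 d a c (x - y) ei)
          = fun y => -(2 * a) * ((inner ℝ (x - y) ei : ℝ) * gK d a c (x - y)) from
        funext fun y => by
          simp only [gK1, ContinuousLinearMap.smul_apply, innerCLM_apply, smul_eq_mul]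
          ring]
      rw [integral_const_mul, hp_def]
    have hU2v : U2 x ei ei = -(2 * a) * u x + 4 * a ^ 2 * q := by
      have h1 : U2 x ei = ∫ y, gK2 d a c (x - y) ei ∂μ := by
        rw [hU2_def]
        exact ContinuousLinearMap.integral_apply (int_g2 x) ei
      rw [h1, ContinuousLinearMap.integral_apply ((int_g2 x).apply_continuousLinearMap ei) ei]
      have hee : (inner ℝ ei ei : ℝ) = 1 := by
        rw [real_inner_self_eq_norm_sq, hei_norm]
        norm_num
      have h2 : (fun y => gK2 d a c (x - y) ei ei)
          = fun y => -(2 * a) * gK d a c (x - y)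
            + 4 * a ^ 2 * ((inner ℝ (x - y) ei : ℝ) ^ 2 * gK d a c (x - y)) := by
        funext y
        simp only [gK2, ContinuousLinearMap.add_apply, ContinuousLinearMap.smul_apply,
          ContinuousLinearMap.smulRight_apply, innerCLM_apply, smul_eq_mul, hee]
        ring
      rw [h2, integral_add ((int_g x).const_mul _) (int_f2g.const_mul _),
        integral_const_mul, integral_const_mul, hq_def, hu_def]
    have hcs : p ^ 2 ≤ u x * q :=
      cauchy_schwarz_int (fun y => (gK_pos hc _).le) (hupos x) (int_g x) int_fg int_f2g
    have hq0 : 0 ≤ q := integral_nonneg fun y => mul_nonneg (sq_nonneg _) (gK_pos hc _).le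
    rw [hU1v, hU2v]
    have hv := hupos x
    have key : (u x)⁻¹ * (-(2 * a) * u x + 4 * a ^ 2 * q) - ((u x) ^ 2)⁻¹ * (-(2 * a) * p) ^ 2
        = -(2 * a) + 4 * a ^ 2 * (((u x) ^ 2)⁻¹ * (u x * q - p ^ 2)) := by
      field_simp
      ring
    rw [key]
    have hnn : 0 ≤ 4 * a ^ 2 * (((u x) ^ 2)⁻¹ * (u x * q - p ^ 2)) :=
      mul_nonneg (by positivity) (mul_nonneg (by positivity) (by linarith))
    linarith
  have h0 : -(d : ℝ) / (2 * t) = ∑ _i : Fin d, -(2 * a) := by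
    rw [Finset.sum_const, Finset.card_univ, Fintype.card_fin, nsmul_eq_mul, ha_def]
    field_simp
    ring
  rw [ge_iff_le, h0]
  exact Finset.sum_le_sum fun i _ => hkey i
end

section
/- Hessian bounds for the log-heat flow: let u_0 be a probability measure on ℝ^d supported in B_R(0) and u(x,t) = (G_t*u_0)(x). Then for all (x,t) ∈ ℝ^d × (0,∞), the Hessian of log u satisfies -(1/(2t)) I_d ⪯ Hess(log u(x,t)) ⪯ (-(1/(2t)) + R²/(4t²)) I_d in the sense of symmetric matrices. -/
open MeasureTheory Real Set

/-- The Hessian of a scalar function, as a bilinear expression evaluated on a pair of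
directions: `hess f x v w = ∂_w ∂_v f (x)`. -/
noncomputable def hess (d : ℕ) (f : EuclideanSpace ℝ (Fin d) → ℝ)
    (x v w : EuclideanSpace ℝ (Fin d)) : ℝ :=
  fderiv ℝ (fun z => fderiv ℝ f z v) x w

lemma hk_pos (d : ℕ) {t : ℝ} (ht : 0 < t) (x : EuclideanSpace ℝ (Fin d)) :
    0 < heatKernel d t x := by
  have : (0:ℝ) < 4 * π * t := by positivity
  exact mul_pos (Real.rpow_pos_of_pos this _) (Real.exp_pos _)

lemma exp_decay {c s : ℝ} (hc : 0 < c) (hs : 0 ≤ s) : s * Real.exp (-s / c) ≤ c := by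
  have h1 : s / c ≤ Real.exp (s / c) := by
    have := Real.add_one_le_exp (s / c)
    have h0 : 0 ≤ s / c := div_nonneg hs hc.le
    linarith
  have h2 : Real.exp (-s / c) = (Real.exp (s / c))⁻¹ := by
    rw [← Real.exp_neg]; ring_nf
  rw [h2]
  rw [div_le_iff₀ hc] at h1
  have hep := Real.exp_pos (s / c)
  rw [mul_inv_le_iff₀ hep]
  nlinarith

lemma mom2 {t r : ℝ} (ht : 0 < t) : r ^ 2 * Real.exp (-r ^ 2 / (4 * t)) ≤ 4 * t :=
  exp_decay (by linarith) (sq_nonneg r)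

lemma mom1 {t r : ℝ} (ht : 0 < t) (hr : 0 ≤ r) :
    r * Real.exp (-r ^ 2 / (4 * t)) ≤ 1 + 4 * t := by
  rcases le_total r 1 with h | h
  · have : Real.exp (-r ^ 2 / (4 * t)) ≤ 1 := by
      apply Real.exp_le_one_iff.mpr
      rw [neg_div]
      exact neg_nonpos.mpr (by positivity)
    nlinarith
  · have := mom2 (r := r) ht
    nlinarith [Real.exp_pos (-r ^ 2 / (4 * t))]

lemma hk_eq (d : ℕ) (t : ℝ) (x : EuclideanSpace ℝ (Fin d)) :
    heatKernel d t x = (4 * π * t) ^ (-(d : ℝ) / 2) *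
      Real.exp ((-(1 / (4 * t))) * ‖x‖ ^ 2) := by
  rw [heatKernel]; congr 1; ring

lemma hk_le (d : ℕ) {t : ℝ} (ht : 0 < t) (x : EuclideanSpace ℝ (Fin d)) :
    heatKernel d t x ≤ (4 * π * t) ^ (-(d : ℝ) / 2) := by
  rw [heatKernel]
  have h1 : Real.exp (-‖x‖ ^ 2 / (4 * t)) ≤ 1 := by
    apply Real.exp_le_one_iff.mpr
    rw [neg_div]
    exact neg_nonpos.mpr (by positivity)
  have h2 : (0:ℝ) < (4 * π * t) ^ (-(d : ℝ) / 2) :=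
    Real.rpow_pos_of_pos (by positivity) _
  nlinarith

noncomputable def K1 (d : ℕ) (t : ℝ) (y z : EuclideanSpace ℝ (Fin d)) :
    EuclideanSpace ℝ (Fin d) →L[ℝ] ℝ :=
  (-(1 / (2 * t)) * heatKernel d t (z - y)) • innerSL ℝ (z - y)

lemma hasFDerivAt_K1 (d : ℕ) {t : ℝ} (ht : 0 < t) (y z : EuclideanSpace ℝ (Fin d)) :
    HasFDerivAt (fun w => heatKernel d t (w - y)) (K1 d t y z) z := by
  have h1 : HasFDerivAt (fun w : EuclideanSpace ℝ (Fin d) => ‖w - y‖ ^ 2)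
      (2 • innerSL ℝ (z - y)) z := by
    simpa using ((hasFDerivAt_id z).sub_const y).norm_sq
  have h2 := (h1.const_mul (-(1 / (4 * t)))).exp
  have h3 := h2.const_mul ((4 * π * t) ^ (-(d : ℝ) / 2))
  simp only [hk_eq]
  refine h3.congr_fderiv (Eq.symm ?_)
  ext w
  simp only [K1, hk_eq, ContinuousLinearMap.coe_smul', Pi.smul_apply, innerSL_apply_apply,
    smul_eq_mul, ContinuousLinearMap.smul_apply, two_smul, ContinuousLinearMap.add_apply]
  have h4 : (2 * t) ≠ 0 := by positivity
  have h5 : (4 * t) ≠ 0 := by positivity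
  field_simp
  ring

lemma hasFDerivAt_inner_sub {d : ℕ} (y v z : EuclideanSpace ℝ (Fin d)) :
    HasFDerivAt (fun w => (inner ℝ (w - y) v : ℝ)) (innerSL ℝ v) z := by
  have heq : (fun w : EuclideanSpace ℝ (Fin d) => (inner ℝ (w - y) v : ℝ))
      = fun w => innerSL ℝ v (w - y) := by
    funext w; rw [innerSL_apply_apply]; exact real_inner_comm _ _
  rw [heq]
  exact ((innerSL ℝ v).hasFDerivAt.comp z ((hasFDerivAt_id z).sub_const y))

noncomputable def K2 (d : ℕ) (t : ℝ) (v y z : EuclideanSpace ℝ (Fin d)) :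
    EuclideanSpace ℝ (Fin d) →L[ℝ] ℝ :=
  heatKernel d t (z - y) •
    (((1 / (4 * t ^ 2)) * (inner ℝ (z - y) v : ℝ)) • innerSL ℝ (z - y)
      - (1 / (2 * t)) • innerSL ℝ v)

lemma hasFDerivAt_K2 (d : ℕ) {t : ℝ} (ht : 0 < t) (v y z : EuclideanSpace ℝ (Fin d)) :
    HasFDerivAt (fun w => heatKernel d t (w - y) * (-(1 / (2 * t)) * (inner ℝ (w - y) v : ℝ)))
      (K2 d t v y z) z := by
  have hb := (hasFDerivAt_inner_sub y v z).const_mul (-(1 / (2 * t)))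
  have h := (hasFDerivAt_K1 d ht y z).mul hb
  refine h.congr_fderiv (Eq.symm ?_)
  ext w
  simp only [K1, K2, ContinuousLinearMap.coe_smul', Pi.smul_apply, innerSL_apply_apply,
    smul_eq_mul, ContinuousLinearMap.smul_apply, ContinuousLinearMap.add_apply,
    ContinuousLinearMap.coe_sub', Pi.sub_apply]
  have h4 : (2 * t) ≠ 0 := by positivity
  field_simp
  ring

set_option maxHeartbeats 1000000 in
set_option synthInstance.maxHeartbeats 200000 in
lemma K1_bound (d : ℕ) {t : ℝ} (ht : 0 < t) (y z : EuclideanSpace ℝ (Fin d)) :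
    ‖K1 d t y z‖ ≤ (4 * π * t) ^ (-(d : ℝ) / 2) * (1 + 4 * t) / (2 * t) := by
  rw [K1, norm_smul ((-(1 / (2 * t)) * heatKernel d t (z - y))) (innerSL ℝ (z - y)),
    innerSL_apply_norm]
  set C := (4 * π * t) ^ (-(d : ℝ) / 2) with hC
  have hCpos : 0 < C := Real.rpow_pos_of_pos (by positivity) _
  have hkpos := hk_pos d ht (z - y)
  have habs : ‖-(1 / (2 * t)) * heatKernel d t (z - y)‖
      = (1 / (2 * t)) * heatKernel d t (z - y) := by
    rw [Real.norm_eq_abs, abs_mul, abs_neg, abs_of_pos (by positivity), abs_of_pos hkpos]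
  rw [habs, heatKernel, ← hC]
  set r := ‖z - y‖ with hr
  have hm := mom1 (t := t) (r := r) ht (norm_nonneg _)
  calc (1 / (2 * t) * (C * Real.exp (-r ^ 2 / (4 * t)))) * r
      = (C * (r * Real.exp (-r ^ 2 / (4 * t)))) / (2 * t) := by ring
    _ ≤ (C * (1 + 4 * t)) / (2 * t) := by gcongr
    _ = C * (1 + 4 * t) / (2 * t) := rfl

set_option maxHeartbeats 1000000 in
set_option synthInstance.maxHeartbeats 200000 in
lemma K2_bound (d : ℕ) {t : ℝ} (ht : 0 < t) (v y z : EuclideanSpace ℝ (Fin d)) :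
    ‖K2 d t v y z‖ ≤ (4 * π * t) ^ (-(d : ℝ) / 2) * ‖v‖ * (1 / t + 1 / (2 * t)) := by
  rw [K2, norm_smul (heatKernel d t (z - y)) (((1 / (4 * t ^ 2)) * (inner ℝ (z - y) v : ℝ)) • innerSL ℝ (z - y) - (1 / (2 * t)) • innerSL ℝ v)]
  set C := (4 * π * t) ^ (-(d : ℝ) / 2) with hC
  have hCpos : 0 < C := Real.rpow_pos_of_pos (by positivity) _
  have hkpos := hk_pos d ht (z - y)
  set r := ‖z - y‖ with hr
  have hrn : 0 ≤ r := norm_nonneg _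
  have hvn : (0 : ℝ) ≤ ‖v‖ := norm_nonneg _
  have hip : |(inner ℝ (z - y) v : ℝ)| ≤ r * ‖v‖ := abs_real_inner_le_norm _ _
  have htri : ‖((1 / (4 * t ^ 2)) * (inner ℝ (z - y) v : ℝ)) • innerSL ℝ (z - y)
      - (1 / (2 * t)) • innerSL ℝ v‖
      ≤ (1 / (4 * t ^ 2)) * (r * ‖v‖) * r + (1 / (2 * t)) * ‖v‖ := by
    refine (norm_sub_le _ _).trans ?_
    rw [norm_smul ((1 / (4 * t ^ 2)) * (inner ℝ (z - y) v : ℝ)) (innerSL ℝ (z - y)),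
      norm_smul ((1 / (2 * t)) : ℝ) (innerSL ℝ v), innerSL_apply_norm, innerSL_apply_norm]
    have e1 : ‖(1 / (4 * t ^ 2)) * (inner ℝ (z - y) v : ℝ)‖ ≤ (1 / (4 * t ^ 2)) * (r * ‖v‖) := by
      rw [Real.norm_eq_abs, abs_mul, abs_of_pos (show (0:ℝ) < 1 / (4 * t ^ 2) by positivity)]
      gcongr
    have e2 : ‖((1 / (2 * t)) : ℝ)‖ = 1 / (2 * t) := by
      rw [Real.norm_eq_abs, abs_of_pos (by positivity)]
    rw [e2]
    gcongr
  have hkn : ‖heatKernel d t (z - y)‖ = heatKernel d t (z - y) := by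
    rw [Real.norm_eq_abs, abs_of_pos hkpos]
  rw [hkn]
  have hk2 : heatKernel d t (z - y) * r ^ 2 ≤ C * (4 * t) := by
    rw [heatKernel, ← hC]
    have := mom2 (t := t) (r := r) ht
    nlinarith [hCpos]
  have hkC := hk_le d ht (z - y)
  calc heatKernel d t (z - y) * ‖((1 / (4 * t ^ 2)) * (inner ℝ (z - y) v : ℝ)) • innerSL ℝ (z - y)
      - (1 / (2 * t)) • innerSL ℝ v‖
      ≤ heatKernel d t (z - y) * ((1 / (4 * t ^ 2)) * (r * ‖v‖) * r + (1 / (2 * t)) * ‖v‖) := by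
        apply mul_le_mul_of_nonneg_left htri hkpos.le
    _ = (heatKernel d t (z - y) * r ^ 2) * ‖v‖ * (1 / (4 * t ^ 2))
        + heatKernel d t (z - y) * ((1 / (2 * t)) * ‖v‖) := by ring
    _ ≤ (C * (4 * t)) * ‖v‖ * (1 / (4 * t ^ 2)) + C * ((1 / (2 * t)) * ‖v‖) := by
        gcongr
    _ = C * ‖v‖ * (1 / t + 1 / (2 * t)) := by field_simp

lemma continuous_hk (d : ℕ) (t : ℝ) (z : EuclideanSpace ℝ (Fin d)) :
    Continuous fun y : EuclideanSpace ℝ (Fin d) => heatKernel d t (z - y) := by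
  unfold heatKernel; fun_prop

lemma continuous_K1 (d : ℕ) (t : ℝ) (z : EuclideanSpace ℝ (Fin d)) :
    Continuous fun y : EuclideanSpace ℝ (Fin d) => K1 d t y z := by
  unfold K1
  exact Continuous.smul (by unfold heatKernel; fun_prop :
      Continuous fun y => -(1 / (2 * t)) * heatKernel d t (z - y))
    ((innerSL ℝ).continuous.comp (continuous_const.sub continuous_id))

lemma continuous_K2 (d : ℕ) (t : ℝ) (v z : EuclideanSpace ℝ (Fin d)) :
    Continuous fun y : EuclideanSpace ℝ (Fin d) => K2 d t v y z := by
  unfold K2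
  apply Continuous.smul (by unfold heatKernel; fun_prop :
    Continuous fun y => heatKernel d t (z - y))
  apply Continuous.sub
  · refine Continuous.smul (f := fun y => 1 / (4 * t ^ 2) * inner ℝ (z - y) v)
      (g := fun y => innerSL ℝ (z - y)) ?_ ?_
    · exact continuous_const.mul
        ((continuous_const.sub continuous_id).inner continuous_const)
    · exact (innerSL ℝ).continuous.comp (continuous_const.sub continuous_id)
  · exact continuous_const

lemma K1_apply (d : ℕ) (t : ℝ) (y w v : EuclideanSpace ℝ (Fin d)) :
    K1 d t y w v = heatKernel d t (w - y) * (-(1 / (2 * t)) * (inner ℝ (w - y) v : ℝ)) := by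
  rw [K1]
  simp only [ContinuousLinearMap.smul_apply, innerSL_apply_apply, smul_eq_mul]
  ring

lemma K2_apply (d : ℕ) (t : ℝ) (v y z : EuclideanSpace ℝ (Fin d)) :
    K2 d t v y z v = heatKernel d t (z - y) *
      ((1 / (4 * t ^ 2)) * (inner ℝ (z - y) v : ℝ) ^ 2 - (1 / (2 * t)) * ‖v‖ ^ 2) := by
  rw [K2]
  simp only [ContinuousLinearMap.smul_apply, ContinuousLinearMap.coe_sub', Pi.sub_apply,
    innerSL_apply_apply, smul_eq_mul, real_inner_self_eq_norm_sq]
  ring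

lemma integrable_hk (d : ℕ) {t : ℝ} (ht : 0 < t)
    (μ : Measure (EuclideanSpace ℝ (Fin d))) [IsFiniteMeasure μ]
    (z : EuclideanSpace ℝ (Fin d)) :
    Integrable (fun y => heatKernel d t (z - y)) μ := by
  refine Integrable.mono' (integrable_const ((4 * π * t) ^ (-(d : ℝ) / 2)))
    (continuous_hk d t z).aestronglyMeasurable (ae_of_all _ fun y => ?_)
  rw [Real.norm_eq_abs, abs_of_pos (hk_pos d ht _)]
  exact hk_le d ht _

lemma integrable_K1 (d : ℕ) {t : ℝ} (ht : 0 < t)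
    (μ : Measure (EuclideanSpace ℝ (Fin d))) [IsFiniteMeasure μ]
    (z : EuclideanSpace ℝ (Fin d)) :
    Integrable (fun y => K1 d t y z) μ :=
  Integrable.mono' (integrable_const _) (continuous_K1 d t z).aestronglyMeasurable
    (ae_of_all _ fun y => K1_bound d ht y z)

lemma hasFDerivAt_U0 (d : ℕ) {t : ℝ} (ht : 0 < t)
    (μ : Measure (EuclideanSpace ℝ (Fin d))) [IsFiniteMeasure μ]
    (x : EuclideanSpace ℝ (Fin d)) :
    HasFDerivAt (fun z => ∫ y, heatKernel d t (z - y) ∂μ) (∫ y, K1 d t y x ∂μ) x := by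
  apply hasFDerivAt_integral_of_dominated_of_fderiv_le (𝕜 := ℝ)
    (F := fun z y => heatKernel d t (z - y)) (F' := fun z y => K1 d t y z)
    (bound := fun _ => (4 * π * t) ^ (-(d : ℝ) / 2) * (1 + 4 * t) / (2 * t))
    (s := Metric.ball x 1) (Metric.ball_mem_nhds x one_pos)
  · exact Filter.Eventually.of_forall fun z => (continuous_hk d t z).aestronglyMeasurable
  · exact integrable_hk d ht μ x
  · exact (continuous_K1 d t x).aestronglyMeasurable
  · exact ae_of_all _ fun y z _ => K1_bound d ht y z
  · exact integrable_const _
  · exact ae_of_all _ fun y z _ => hasFDerivAt_K1 d ht y z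

lemma integrable_K1v (d : ℕ) {t : ℝ} (ht : 0 < t)
    (μ : Measure (EuclideanSpace ℝ (Fin d))) [IsFiniteMeasure μ]
    (z v : EuclideanSpace ℝ (Fin d)) :
    Integrable (fun y => K1 d t y z v) μ := by
  refine Integrable.mono' (integrable_const
      ((4 * π * t) ^ (-(d : ℝ) / 2) * (1 + 4 * t) / (2 * t) * ‖v‖))
    ?_ (ae_of_all _ fun y => ?_)
  · exact (Continuous.aestronglyMeasurable (by
      exact ((ContinuousLinearMap.apply ℝ ℝ v).continuous.comp (continuous_K1 d t z))))
  · exact ((K1 d t y z).le_opNorm v).trans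
      (mul_le_mul_of_nonneg_right (K1_bound d ht y z) (norm_nonneg v))

lemma hasFDerivAt_U1 (d : ℕ) {t : ℝ} (ht : 0 < t)
    (μ : Measure (EuclideanSpace ℝ (Fin d))) [IsFiniteMeasure μ]
    (x v : EuclideanSpace ℝ (Fin d)) :
    HasFDerivAt (fun z => ∫ y, K1 d t y z v ∂μ) (∫ y, K2 d t v y x ∂μ) x := by
  apply hasFDerivAt_integral_of_dominated_of_fderiv_le (𝕜 := ℝ)
    (F := fun z y => K1 d t y z v) (F' := fun z y => K2 d t v y z)
    (bound := fun _ => (4 * π * t) ^ (-(d : ℝ) / 2) * ‖v‖ * (1 / t + 1 / (2 * t)))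
    (s := Metric.ball x 1) (Metric.ball_mem_nhds x one_pos)
  · refine Filter.Eventually.of_forall fun z => Continuous.aestronglyMeasurable ?_
    exact (ContinuousLinearMap.apply ℝ ℝ v).continuous.comp (continuous_K1 d t z)
  · exact integrable_K1v d ht μ x v
  · exact (continuous_K2 d t v x).aestronglyMeasurable
  · exact ae_of_all _ fun y z _ => K2_bound d ht v y z
  · exact integrable_const _
  · refine ae_of_all _ fun y z _ => ?_
    have h := hasFDerivAt_K2 d ht v y z
    have heq : (fun w => K1 d t y w v)
        = fun w => heatKernel d t (w - y) * (-(1 / (2 * t)) * (inner ℝ (w - y) v : ℝ)) := by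
      funext w; exact K1_apply d t y w v
    rw [heq]
    exact h

lemma integrable_K2v (d : ℕ) {t : ℝ} (ht : 0 < t)
    (μ : Measure (EuclideanSpace ℝ (Fin d))) [IsFiniteMeasure μ]
    (z v : EuclideanSpace ℝ (Fin d)) :
    Integrable (fun y => K2 d t v y z) μ :=
  Integrable.mono' (integrable_const _) (continuous_K2 d t v z).aestronglyMeasurable
    (ae_of_all _ fun y => K2_bound d ht v y z)

lemma hk_mul_sq_le (d : ℕ) {t : ℝ} (ht : 0 < t) (w : EuclideanSpace ℝ (Fin d)) :
    heatKernel d t w * ‖w‖ ^ 2 ≤ (4 * π * t) ^ (-(d : ℝ) / 2) * (4 * t) := by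
  rw [heatKernel]
  have := mom2 (t := t) (r := ‖w‖) ht
  have hCpos : (0:ℝ) < (4 * π * t) ^ (-(d : ℝ) / 2) := Real.rpow_pos_of_pos (by positivity) _
  nlinarith

lemma u_pos (d : ℕ) {R t : ℝ} (ht : 0 < t)
    (μ : Measure (EuclideanSpace ℝ (Fin d))) [IsProbabilityMeasure μ]
    (hsupp : ∀ᵐ y ∂μ, y ∈ Metric.closedBall (0 : EuclideanSpace ℝ (Fin d)) R)
    (z : EuclideanSpace ℝ (Fin d)) :
    0 < ∫ y, heatKernel d t (z - y) ∂μ := by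
  set c : ℝ := (4 * π * t) ^ (-(d : ℝ) / 2) * Real.exp (-(‖z‖ + R) ^ 2 / (4 * t)) with hc
  have hcpos : 0 < c := by
    apply mul_pos (Real.rpow_pos_of_pos (by positivity) _) (Real.exp_pos _)
  have hbd : ∀ᵐ y ∂μ, c ≤ heatKernel d t (z - y) := by
    filter_upwards [hsupp] with y hy
    rw [Metric.mem_closedBall, dist_zero_right] at hy
    have hzy : ‖z - y‖ ≤ ‖z‖ + R := (norm_sub_le z y).trans (by linarith)
    rw [heatKernel, hc]
    gcongr
  calc (0:ℝ) < c := hcpos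
    _ = ∫ _, c ∂μ := by simp
    _ ≤ ∫ y, heatKernel d t (z - y) ∂μ :=
        integral_mono_ae (integrable_const c) (integrable_hk d ht μ z) hbd

set_option maxHeartbeats 1000000 in
/-- Hessian bounds for the log-heat flow, stated as quadratic-form inequalities:
`-(1/(2t)) I ⪯ Hess(log u) ⪯ (-(1/(2t)) + R²/(4t²)) I`. -/
theorem hessian_bounds_log_heat_flow (d : ℕ) (R : ℝ) (hR : 0 < R)
    (μ : Measure (EuclideanSpace ℝ (Fin d))) [IsProbabilityMeasure μ]
    (hsupp : ∀ᵐ y ∂μ, y ∈ Metric.closedBall (0 : EuclideanSpace ℝ (Fin d)) R)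
    (x : EuclideanSpace ℝ (Fin d)) (t : ℝ) (ht : 0 < t) :
    ∀ v : EuclideanSpace ℝ (Fin d),
      -(1 / (2 * t)) * ‖v‖ ^ 2 ≤ hess d (fun z => Real.log (heatFlow d μ z t)) x v v ∧
      hess d (fun z => Real.log (heatFlow d μ z t)) x v v ≤
        (-(1 / (2 * t)) + R ^ 2 / (4 * t ^ 2)) * ‖v‖ ^ 2 := by
  intro v
  have ht2 : (2 * t) ≠ 0 := by positivity
  -- notation
  set g0 : EuclideanSpace ℝ (Fin d) → ℝ := fun y => heatKernel d t (x - y) with hg0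
  set α : EuclideanSpace ℝ (Fin d) → ℝ :=
    fun y => -(1 / (2 * t)) * (inner ℝ (x - y) v : ℝ) with hα
  have hUpos : ∀ z, 0 < ∫ y, heatKernel d t (z - y) ∂μ :=
    fun z => u_pos d ht μ hsupp z
  have hU0 : ∀ z, HasFDerivAt (fun w => ∫ y, heatKernel d t (w - y) ∂μ)
      (∫ y, K1 d t y z ∂μ) z := fun z => hasFDerivAt_U0 d ht μ z
  have hlog : ∀ z, HasFDerivAt (fun w => Real.log (∫ y, heatKernel d t (w - y) ∂μ))
      ((∫ y, heatKernel d t (z - y) ∂μ)⁻¹ • (∫ y, K1 d t y z ∂μ)) z :=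
    fun z => (hU0 z).log (ne_of_gt (hUpos z))
  -- step 1: first derivative of log u
  have hfd1 : (fun z => fderiv ℝ (fun w => Real.log (heatFlow d μ w t)) z v)
      = fun z => (∫ y, heatKernel d t (z - y) ∂μ)⁻¹ * (∫ y, K1 d t y z v ∂μ) := by
    funext z
    show fderiv ℝ (fun w => Real.log (∫ y, heatKernel d t (w - y) ∂μ)) z v = _
    rw [(hlog z).fderiv]
    simp only [ContinuousLinearMap.coe_smul', Pi.smul_apply, smul_eq_mul]
    congr 1
    exact ContinuousLinearMap.integral_apply (integrable_K1 d ht μ z) v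
  -- step 2: hessian value
  have hU1 : HasFDerivAt (fun z => ∫ y, K1 d t y z v ∂μ) (∫ y, K2 d t v y x ∂μ) x :=
    hasFDerivAt_U1 d ht μ x v
  have hInv : HasFDerivAt (fun z => (∫ y, heatKernel d t (z - y) ∂μ)⁻¹)
      ((-((∫ y, heatKernel d t (x - y) ∂μ) ^ 2)⁻¹) • (∫ y, K1 d t y x ∂μ)) x :=
    (hasDerivAt_inv (ne_of_gt (hUpos x))).comp_hasFDerivAt x (hU0 x)
  have hprod := hInv.mul hU1
  set m0 : ℝ := ∫ y, heatKernel d t (x - y) ∂μ with hm0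
  set m1 : ℝ := ∫ y, K1 d t y x v ∂μ with hm1
  have hm0pos : 0 < m0 := hUpos x
  have hval : hess d (fun z => Real.log (heatFlow d μ z t)) x v v
      = m0⁻¹ * (∫ y, K2 d t v y x v ∂μ) + m1 * (-(m0 ^ 2)⁻¹ * m1) := by
    show fderiv ℝ (fun z => fderiv ℝ (fun w => Real.log (heatFlow d μ w t)) z v) x v = _
    rw [hfd1, (show HasFDerivAt (fun z => (∫ y, heatKernel d t (z - y) ∂μ)⁻¹ *
      ∫ y, K1 d t y z v ∂μ) _ x from hprod).fderiv]
    simp only [ContinuousLinearMap.add_apply, ContinuousLinearMap.coe_smul', Pi.smul_apply,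
      smul_eq_mul]
    rw [ContinuousLinearMap.integral_apply (integrable_K2v d ht μ x v) v,
      ContinuousLinearMap.integral_apply (integrable_K1 d ht μ x) v]
  -- integrands in terms of g0 and α
  have int_g : Integrable g0 μ := integrable_hk d ht μ x
  have int_gα : Integrable (fun y => g0 y * α y) μ := by
    have he : (fun y => g0 y * α y) = fun y => K1 d t y x v :=
      funext fun y => (K1_apply d t y x v).symm
    rw [he]; exact integrable_K1v d ht μ x v
  have int_gα2 : Integrable (fun y => g0 y * α y ^ 2) μ := by
    refine Integrable.mono' (integrable_const
        ((4 * π * t) ^ (-(d : ℝ) / 2) * ‖v‖ ^ 2 / t)) ?_ (ae_of_all _ fun y => ?_)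
    · apply Continuous.aestronglyMeasurable
      exact (continuous_hk d t x).mul ((continuous_const.mul
        ((continuous_const.sub continuous_id).inner continuous_const)).pow 2)
    · have hgp := hk_pos d ht (x - y)
      have hb : |(inner ℝ (x - y) v : ℝ)| ≤ ‖x - y‖ * ‖v‖ := abs_real_inner_le_norm _ _
      have h2 := hk_mul_sq_le d ht (x - y)
      rw [Real.norm_eq_abs, abs_of_nonneg (mul_nonneg hgp.le (sq_nonneg _))]
      have hb2 : (inner ℝ (x - y) v : ℝ) ^ 2 ≤ ‖x - y‖ ^ 2 * ‖v‖ ^ 2 := by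
        nlinarith [hb, abs_nonneg ((inner ℝ (x - y) v : ℝ)), sq_abs ((inner ℝ (x - y) v : ℝ)),
          norm_nonneg (x - y), norm_nonneg v]
      have hα2 : α y ^ 2 ≤ (1 / (4 * t ^ 2)) * (‖x - y‖ ^ 2 * ‖v‖ ^ 2) := by
        rw [hα]
        have hc2 : (-(1 / (2 * t)) : ℝ) ^ 2 = 1 / (4 * t ^ 2) := by
          field_simp; ring
        have he0 : (-(1 / (2 * t)) * (inner ℝ (x - y) v : ℝ)) ^ 2
            = (1 / (4 * t ^ 2)) * (inner ℝ (x - y) v : ℝ) ^ 2 := by rw [mul_pow, hc2]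
        rw [he0]
        exact mul_le_mul_of_nonneg_left hb2 (by positivity)
      calc g0 y * α y ^ 2 ≤ g0 y * ((1 / (4 * t ^ 2)) * (‖x - y‖ ^ 2 * ‖v‖ ^ 2)) := by
            exact mul_le_mul_of_nonneg_left hα2 hgp.le
        _ = (heatKernel d t (x - y) * ‖x - y‖ ^ 2) * ‖v‖ ^ 2 * (1 / (4 * t ^ 2)) := by
            rw [hg0]; ring
        _ ≤ ((4 * π * t) ^ (-(d : ℝ) / 2) * (4 * t)) * ‖v‖ ^ 2 * (1 / (4 * t ^ 2)) := by
            gcongr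
        _ = (4 * π * t) ^ (-(d : ℝ) / 2) * ‖v‖ ^ 2 / t := by field_simp
  set q : ℝ := ∫ y, g0 y * α y ^ 2 ∂μ with hq
  have hm1' : m1 = ∫ y, g0 y * α y ∂μ := by
    rw [hm1]
    exact integral_congr_ae (ae_of_all _ fun y => (K1_apply d t y x v))
  have hM2 : (∫ y, K2 d t v y x v ∂μ) = q - (‖v‖ ^ 2 / (2 * t)) * m0 := by
    have he : (fun y => K2 d t v y x v)
        = fun y => g0 y * α y ^ 2 - (‖v‖ ^ 2 / (2 * t)) * g0 y := by
      funext y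
      rw [K2_apply, hg0, hα]
      field_simp
      ring
    have ic : Integrable (fun y => ‖v‖ ^ 2 / (2 * t) * g0 y) μ := by
      exact int_g.const_mul _
    rw [he, integral_sub int_gα2 ic, integral_const_mul]
  -- expansion of the square
  have int_sq : ∀ s : ℝ, Integrable (fun y => g0 y * (α y - s) ^ 2) μ := by
    intro s
    have he : (fun y => g0 y * (α y - s) ^ 2)
        = fun y => (g0 y * α y ^ 2 - 2 * s * (g0 y * α y)) + s ^ 2 * g0 y := by
      funext y; ring
    rw [he]
    have i1 : Integrable (fun y => g0 y * α y ^ 2 - 2 * s * (g0 y * α y)) μ := by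
      exact int_gα2.sub (int_gα.const_mul _)
    have i2 : Integrable (fun y => s ^ 2 * g0 y) μ := by exact int_g.const_mul _
    exact i1.add i2
  have expand : ∀ s : ℝ, ∫ y, g0 y * (α y - s) ^ 2 ∂μ
      = q - 2 * s * m1 + s ^ 2 * m0 := by
    intro s
    have he : (fun y => g0 y * (α y - s) ^ 2)
        = fun y => (g0 y * α y ^ 2 - 2 * s * (g0 y * α y)) + s ^ 2 * g0 y := by
      funext y; ring
    have i1 : Integrable (fun y => g0 y * α y ^ 2 - 2 * s * (g0 y * α y)) μ := by
      exact int_gα2.sub (int_gα.const_mul _)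
    have i2 : Integrable (fun y => s ^ 2 * g0 y) μ := by exact int_g.const_mul _
    have i3 : Integrable (fun y => 2 * s * (g0 y * α y)) μ := by
      exact int_gα.const_mul _
    rw [he, integral_add i1 i2, integral_sub int_gα2 i3, integral_const_mul,
      integral_const_mul, hm1', ← hq]
  -- lower bound : m1^2 ≤ q * m0
  have lower : m1 ^ 2 ≤ q * m0 := by
    have h := integral_nonneg (μ := μ) (f := fun y => g0 y * (α y - m1 / m0) ^ 2)
      (fun y => mul_nonneg (hk_pos d ht _).le (sq_nonneg _))
    rw [expand] at h
    have hne : m0 ≠ 0 := ne_of_gt hm0pos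
    have e : q - 2 * (m1 / m0) * m1 + (m1 / m0) ^ 2 * m0 = q - m1 ^ 2 / m0 := by
      field_simp
      ring
    rw [e] at h
    have h2 : m1 ^ 2 / m0 ≤ q := by linarith
    calc m1 ^ 2 = (m1 ^ 2 / m0) * m0 := by field_simp
      _ ≤ q * m0 := mul_le_mul_of_nonneg_right h2 hm0pos.le
  -- upper bound
  set cc : ℝ := -(1 / (2 * t)) * (inner ℝ x v : ℝ) with hcc
  have upper : q - 2 * cc * m1 + cc ^ 2 * m0 ≤ (R ^ 2 * ‖v‖ ^ 2 / (4 * t ^ 2)) * m0 := by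
    rw [← expand cc]
    have hmono : ∫ y, g0 y * (α y - cc) ^ 2 ∂μ
        ≤ ∫ y, (R ^ 2 * ‖v‖ ^ 2 / (4 * t ^ 2)) * g0 y ∂μ := by
      apply integral_mono_ae (int_sq cc) (int_g.const_mul _)
      filter_upwards [hsupp] with y hy
      rw [Metric.mem_closedBall, dist_zero_right] at hy
      have hdiff : α y - cc = (1 / (2 * t)) * (inner ℝ y v : ℝ) := by
        simp only [hα, hcc]
        rw [inner_sub_left]
        ring
      have hyv : |(inner ℝ y v : ℝ)| ≤ R * ‖v‖ :=
        (abs_real_inner_le_norm y v).trans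
          (mul_le_mul_of_nonneg_right hy (norm_nonneg v))
      have hyv2 : (inner ℝ y v : ℝ) ^ 2 ≤ R ^ 2 * ‖v‖ ^ 2 := by
        nlinarith [hyv, abs_nonneg ((inner ℝ y v : ℝ)), sq_abs ((inner ℝ y v : ℝ))]
      have hsq : (α y - cc) ^ 2 ≤ R ^ 2 * ‖v‖ ^ 2 / (4 * t ^ 2) := by
        rw [hdiff]
        have hc2 : ((1 / (2 * t)) : ℝ) ^ 2 = 1 / (4 * t ^ 2) := by
          field_simp; ring
        have h1 : ((1 / (2 * t)) * (inner ℝ y v : ℝ)) ^ 2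
            = (inner ℝ y v : ℝ) ^ 2 / (4 * t ^ 2) := by
          rw [mul_pow, hc2]; ring
        rw [h1, div_le_div_iff_of_pos_right (show (0:ℝ) < 4 * t ^ 2 by positivity)]
        exact hyv2
      calc g0 y * (α y - cc) ^ 2 ≤ g0 y * (R ^ 2 * ‖v‖ ^ 2 / (4 * t ^ 2)) :=
            mul_le_mul_of_nonneg_left hsq (hk_pos d ht _).le
        _ = (R ^ 2 * ‖v‖ ^ 2 / (4 * t ^ 2)) * g0 y := by ring
    calc ∫ y, g0 y * (α y - cc) ^ 2 ∂μ
        ≤ ∫ y, (R ^ 2 * ‖v‖ ^ 2 / (4 * t ^ 2)) * g0 y ∂μ := hmono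
      _ = (R ^ 2 * ‖v‖ ^ 2 / (4 * t ^ 2)) * m0 := by rw [integral_const_mul]
  -- final assembly
  have hne : m0 ≠ 0 := ne_of_gt hm0pos
  have heq2 : hess d (fun z => Real.log (heatFlow d μ z t)) x v v
      = q / m0 - ‖v‖ ^ 2 / (2 * t) - m1 ^ 2 / m0 ^ 2 := by
    rw [hval, hM2]
    field_simp
    ring
  constructor
  · rw [heq2]
    have h1 : m1 ^ 2 / m0 ^ 2 ≤ q / m0 := by
      rw [div_le_div_iff₀ (by positivity) hm0pos]
      nlinarith [lower, hm0pos]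
    have : -(1 / (2 * t)) * ‖v‖ ^ 2 = -(‖v‖ ^ 2 / (2 * t)) := by ring
    linarith
  · rw [heq2]
    have hdiv : q / m0 - 2 * cc * (m1 / m0) + cc ^ 2 ≤ R ^ 2 * ‖v‖ ^ 2 / (4 * t ^ 2) := by
      have h3 : (q - 2 * cc * m1 + cc ^ 2 * m0) / m0 ≤ R ^ 2 * ‖v‖ ^ 2 / (4 * t ^ 2) := by
        rw [div_le_iff₀ hm0pos]
        exact upper
      calc q / m0 - 2 * cc * (m1 / m0) + cc ^ 2
          = (q - 2 * cc * m1 + cc ^ 2 * m0) / m0 := by field_simp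
        _ ≤ R ^ 2 * ‖v‖ ^ 2 / (4 * t ^ 2) := h3
    have hsq : 0 ≤ (m1 / m0 - cc) ^ 2 := sq_nonneg _
    have hexp : (m1 / m0 - cc) ^ 2 = m1 ^ 2 / m0 ^ 2 - 2 * cc * (m1 / m0) + cc ^ 2 := by
      field_simp
      ring
    have h4 : q / m0 - m1 ^ 2 / m0 ^ 2 ≤ R ^ 2 * ‖v‖ ^ 2 / (4 * t ^ 2) := by
      rw [hexp] at hsq
      linarith
    have hgoal : (-(1 / (2 * t)) + R ^ 2 / (4 * t ^ 2)) * ‖v‖ ^ 2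
        = -(‖v‖ ^ 2 / (2 * t)) + R ^ 2 * ‖v‖ ^ 2 / (4 * t ^ 2) := by ring
    linarith [hgoal.ge, hgoal.le, h4]
end

section
/- Covariance representation of the log-Hessian: let u_0 be a probability measure on ℝ^d with compact support and u(x,t) = (G_t*u_0)(x). Then Hess(log u(x,t)) = -(1/(2t)) I_d + (1/(4t²)) Cov(Y_x), where Y_x is the random variable with law (G_t(x-·)/u(x,t)) du_0(·), and Cov denotes its covariance matrix. -/
set_option maxHeartbeats 1000000
set_option synthInstance.maxHeartbeats 200000


open MeasureTheory Real Set

/-- Second partial derivative `∂_j ∂_i f (x)`, the `(i,j)` entry of the Hessian matrix. -/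
noncomputable def hessEntry (d : ℕ) (f : EuclideanSpace ℝ (Fin d) → ℝ)
    (x : EuclideanSpace ℝ (Fin d)) (i j : Fin d) : ℝ :=
  fderiv ℝ (fun z => fderiv ℝ f z (EuclideanSpace.single i (1 : ℝ))) x
    (EuclideanSpace.single j (1 : ℝ))

/-- The tilted probability measure `(G_t(x-·)/u(x,t)) dμ(·)`. -/
noncomputable def tilted (d : ℕ) (μ : Measure (EuclideanSpace ℝ (Fin d)))
    (x : EuclideanSpace ℝ (Fin d)) (t : ℝ) : Measure (EuclideanSpace ℝ (Fin d)) :=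
  μ.withDensity (fun y => ENNReal.ofReal (heatKernel d t (x - y) / heatFlow d μ x t))


variable {d : ℕ}

local notation "E" => EuclideanSpace ℝ (Fin d)

lemma heatKernel_pos {t : ℝ} (ht : 0 < t) (z : E) : 0 < heatKernel d t z := by
  unfold heatKernel
  positivity

lemma heatKernel_le {t : ℝ} (ht : 0 < t) (z : E) :
    heatKernel d t z ≤ (4 * π * t) ^ (-(d : ℝ) / 2) := by
  unfold heatKernel
  have hc : (0:ℝ) ≤ (4 * π * t) ^ (-(d : ℝ) / 2) := by positivity
  have he : Real.exp (-‖z‖ ^ 2 / (4 * t)) ≤ 1 := by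
    rw [Real.exp_le_one_iff]
    have h1 : (0:ℝ) ≤ ‖z‖ ^ 2 := by positivity
    have h4 : (0:ℝ) < 4 * t := by linarith
    rw [neg_div]
    simp only [Left.neg_nonpos_iff]
    positivity
  calc (4 * π * t) ^ (-(d : ℝ) / 2) * Real.exp (-‖z‖ ^ 2 / (4 * t))
      ≤ (4 * π * t) ^ (-(d : ℝ) / 2) * 1 := by
        exact mul_le_mul_of_nonneg_left he hc
    _ = _ := mul_one _

lemma heatKernel_hasFDerivAt {t : ℝ} (ht : 0 < t) (z : E) :
    HasFDerivAt (heatKernel d t)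
      ((-(1 / (2 * t)) * heatKernel d t z) • innerSL ℝ z) z := by
  have h1 : HasFDerivAt (fun z : E => ‖z‖ ^ 2) (2 • innerSL ℝ z) z :=
    (hasStrictFDerivAt_norm_sq z).hasFDerivAt
  have h2 : HasFDerivAt (fun z : E => -(1 / (4 * t)) * ‖z‖ ^ 2)
      ((-(1 / (4 * t))) • (2 • innerSL ℝ z)) z := h1.const_mul _
  have h3 := h2.exp
  have h4 := h3.const_mul ((4 * π * t) ^ (-(d : ℝ) / 2))
  have hfun : (fun z : E => (4 * π * t) ^ (-(d : ℝ) / 2) *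
      Real.exp (-(1 / (4 * t)) * ‖z‖ ^ 2)) = heatKernel d t := by
    funext w
    unfold heatKernel
    ring_nf
  rw [hfun] at h4
  refine h4.congr_fderiv ?_
  ext v
  simp only [ContinuousLinearMap.coe_smul', Pi.smul_apply, smul_eq_mul,
    ContinuousLinearMap.coe_smul]
  unfold heatKernel
  ring_nf

/-- gradient CLM of the heat kernel at `w`. -/
noncomputable def gradK (d : ℕ) (t : ℝ) (w : EuclideanSpace ℝ (Fin d)) :
    EuclideanSpace ℝ (Fin d) →L[ℝ] ℝ :=
  (-(1 / (2 * t)) * heatKernel d t w) • innerSL ℝ w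

/-- CLM giving the derivative of `z ↦ gradK (z - y) eᵢ`. -/
noncomputable def hessK (d : ℕ) (t : ℝ) (i : Fin d) (w : EuclideanSpace ℝ (Fin d)) :
    EuclideanSpace ℝ (Fin d) →L[ℝ] ℝ :=
  (-(1 / (2 * t)) * heatKernel d t w) • innerSL ℝ (EuclideanSpace.single i (1 : ℝ)) +
    ((1 / (4 * t ^ 2)) * heatKernel d t w *
      innerSL ℝ w (EuclideanSpace.single i (1 : ℝ))) • innerSL ℝ w

lemma shift_hasFDerivAt {t : ℝ} (ht : 0 < t) (y z : E) :
    HasFDerivAt (fun z : E => heatKernel d t (z - y)) (gradK d t (z - y)) z := by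
  have h := (heatKernel_hasFDerivAt ht (z - y)).comp z ((hasFDerivAt_id z).sub_const y)
  simpa [gradK, Function.comp_def] using h

lemma gradK_apply_hasFDerivAt {t : ℝ} (ht : 0 < t) (i : Fin d) (y z : E) :
    HasFDerivAt (fun z : E => gradK d t (z - y) (EuclideanSpace.single i (1 : ℝ)))
      (hessK d t i (z - y)) z := by
  have hf1 : HasFDerivAt (fun z : E => -(1 / (2 * t)) * heatKernel d t (z - y))
      ((-(1 / (2 * t))) • gradK d t (z - y)) z := (shift_hasFDerivAt ht y z).const_mul _
  have hf2 : HasFDerivAt (fun z : E => innerSL ℝ (z - y) (EuclideanSpace.single i (1 : ℝ)))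
      (innerSL ℝ (EuclideanSpace.single i (1 : ℝ))) z := by
    have hfun : (fun z : E => innerSL ℝ (z - y) (EuclideanSpace.single i (1 : ℝ))) =
        fun z : E => innerSL ℝ (EuclideanSpace.single i (1 : ℝ)) (z - y) := by
      funext w
      simp only [innerSL_apply_apply]
      exact real_inner_comm _ _
    rw [hfun]
    have := (innerSL ℝ (EuclideanSpace.single i (1 : ℝ))).hasFDerivAt.comp z
      ((hasFDerivAt_id z).sub_const y)
    simpa [Function.comp_def] using this
  have h := hf1.mul hf2
  have hfun2 : (fun z : E => (-(1 / (2 * t)) * heatKernel d t (z - y)) *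
      innerSL ℝ (z - y) (EuclideanSpace.single i (1 : ℝ))) =
      fun z : E => gradK d t (z - y) (EuclideanSpace.single i (1 : ℝ)) := by
    funext w
    simp [gradK]
  simp only [Pi.mul_def] at h
  rw [hfun2] at h
  refine h.congr_fderiv ?_
  ext v
  simp only [hessK, gradK, ContinuousLinearMap.add_apply, ContinuousLinearMap.coe_smul',
    Pi.smul_apply, smul_eq_mul, innerSL_apply_apply]
  ring

lemma integrable_of_ball_bound {F : Type*} [NormedAddCommGroup F] {μ : Measure E}
    [IsFiniteMeasure μ] {R : ℝ}
    (hsupp : ∀ᵐ y ∂μ, y ∈ Metric.closedBall (0 : E) R) {f : E → F}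
    (hf : AEStronglyMeasurable f μ) {M : ℝ}
    (hM : ∀ y ∈ Metric.closedBall (0 : E) R, ‖f y‖ ≤ M) : Integrable f μ :=
  (integrable_const M).mono' hf (hsupp.mono fun y hy => hM y hy)

lemma continuous_heatKernel (t : ℝ) : Continuous (heatKernel d t) := by
  unfold heatKernel
  fun_prop

lemma continuous_gradK (t : ℝ) (z : E) : Continuous fun y : E => gradK d t (z - y) := by
  unfold gradK
  have h1 : Continuous fun y : E => z - y := by continuity
  exact ((continuous_const.mul ((continuous_heatKernel t).comp h1)).smul
    ((innerSL ℝ).continuous.comp h1))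

lemma continuous_hessK (t : ℝ) (i : Fin d) (z : E) :
    Continuous fun y : E => hessK d t i (z - y) := by
  unfold hessK
  have h1 : Continuous fun y : E => z - y := by continuity
  have h2 : Continuous fun y : E => heatKernel d t (z - y) := (continuous_heatKernel t).comp h1
  have h3 : Continuous fun y : E => innerSL ℝ (z - y) (EuclideanSpace.single i (1 : ℝ)) := by
    exact ((innerSL ℝ).continuous.comp h1).clm_apply continuous_const
  exact ((continuous_const.mul h2).smul continuous_const).add
    (((continuous_const.mul h2).mul h3).smul ((innerSL ℝ).continuous.comp h1))

lemma norm_gradK_le {t : ℝ} (ht : 0 < t) (w : E) :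
    ‖gradK d t w‖ ≤ 1 / (2 * t) * (4 * π * t) ^ (-(d : ℝ) / 2) * ‖w‖ := by
  unfold gradK
  rw [norm_smul (-(1 / (2 * t)) * heatKernel d t w) (innerSL ℝ w), innerSL_apply_norm]
  have hK := heatKernel_pos ht w
  have : ‖-(1 / (2 * t)) * heatKernel d t w‖ = 1 / (2 * t) * heatKernel d t w := by
    rw [Real.norm_eq_abs, abs_mul, abs_neg, abs_of_pos (by positivity), abs_of_pos hK]
  rw [this]
  exact mul_le_mul_of_nonneg_right
    (mul_le_mul_of_nonneg_left (heatKernel_le ht w) (by positivity)) (norm_nonneg w)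

lemma norm_hessK_le {t : ℝ} (ht : 0 < t) (i : Fin d) (w : E) :
    ‖hessK d t i w‖ ≤ 1 / (2 * t) * (4 * π * t) ^ (-(d : ℝ) / 2) +
      1 / (4 * t ^ 2) * (4 * π * t) ^ (-(d : ℝ) / 2) * ‖w‖ ^ 2 := by
  unfold hessK
  have hK := heatKernel_pos ht w
  have hKle := heatKernel_le ht w
  have hsingle : ‖EuclideanSpace.single i (1 : ℝ)‖ = 1 := by
    rw [EuclideanSpace.norm_single, norm_one]
  apply le_trans (norm_add_le _ _)
  have h1 : ‖(-(1 / (2 * t)) * heatKernel d t w) • innerSL ℝ (EuclideanSpace.single i (1 : ℝ))‖ ≤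
      1 / (2 * t) * (4 * π * t) ^ (-(d : ℝ) / 2) := by
    rw [norm_smul (-(1 / (2 * t)) * heatKernel d t w) (innerSL ℝ (EuclideanSpace.single i (1:ℝ))), innerSL_apply_norm, hsingle, mul_one, Real.norm_eq_abs, abs_mul, abs_neg,
      abs_of_pos (show (0:ℝ) < 1 / (2*t) by positivity), abs_of_pos hK]
    exact mul_le_mul_of_nonneg_left hKle (by positivity)
  have hinner : |innerSL ℝ w (EuclideanSpace.single i (1 : ℝ))| ≤ ‖w‖ := by
    have := abs_real_inner_le_norm w (EuclideanSpace.single i (1 : ℝ))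
    rw [hsingle, mul_one] at this
    exact this
  have h2 : ‖((1 / (4 * t ^ 2)) * heatKernel d t w *
      innerSL ℝ w (EuclideanSpace.single i (1 : ℝ))) • innerSL ℝ w‖ ≤
      1 / (4 * t ^ 2) * (4 * π * t) ^ (-(d : ℝ) / 2) * ‖w‖ ^ 2 := by
    rw [norm_smul ((1 / (4 * t ^ 2)) * heatKernel d t w * innerSL ℝ w (EuclideanSpace.single i (1:ℝ))) (innerSL ℝ w), innerSL_apply_norm, Real.norm_eq_abs, abs_mul, abs_mul,
      abs_of_pos (show (0:ℝ) < 1 / (4 * t ^ 2) by positivity), abs_of_pos hK]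
    calc 1 / (4 * t ^ 2) * heatKernel d t w * |innerSL ℝ w (EuclideanSpace.single i (1 : ℝ))| * ‖w‖
        ≤ 1 / (4 * t ^ 2) * (4 * π * t) ^ (-(d : ℝ) / 2) * ‖w‖ * ‖w‖ := by
          gcongr
      _ = 1 / (4 * t ^ 2) * (4 * π * t) ^ (-(d : ℝ) / 2) * ‖w‖ ^ 2 := by ring
  linarith

lemma heatFlow_hasFDerivAt {R t : ℝ} (hR : 0 < R) (ht : 0 < t)
    {μ : Measure E} [IsProbabilityMeasure μ]
    (hsupp : ∀ᵐ y ∂μ, y ∈ Metric.closedBall (0 : E) R) (z : E) :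
    HasFDerivAt (fun z : E => ∫ y, heatKernel d t (z - y) ∂μ)
      (∫ y, gradK d t (z - y) ∂μ) z := by
  set c := (4 * π * t) ^ (-(d : ℝ) / 2) with hc
  have hcpos : 0 < c := by rw [hc]; positivity
  refine hasFDerivAt_integral_of_dominated_of_fderiv_le
    (F' := fun z y => gradK d t (z - y))
    (bound := fun _ => 1 / (2 * t) * c * (‖z‖ + 1 + R)) (Metric.ball_mem_nhds z one_pos) ?_ ?_ ?_ ?_ ?_ ?_
  · refine Filter.Eventually.of_forall fun z' => ?_
    exact ((continuous_heatKernel t).comp (by continuity)).aestronglyMeasurable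
  · refine integrable_of_ball_bound hsupp
      ((continuous_heatKernel t).comp (by continuity)).aestronglyMeasurable
      (M := c) fun y _ => ?_
    rw [Real.norm_eq_abs, abs_of_pos (heatKernel_pos ht _)]
    exact heatKernel_le ht _
  · exact (continuous_gradK t z).aestronglyMeasurable
  · refine hsupp.mono fun y hy z' hz' => ?_
    have hyR : ‖y‖ ≤ R := by rwa [Metric.mem_closedBall, dist_zero_right] at hy
    have hz'n : ‖z' - y‖ ≤ ‖z‖ + 1 + R := by
      have h1 : ‖z' - y‖ ≤ ‖z'‖ + ‖y‖ := norm_sub_le _ _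
      have h2 : ‖z'‖ ≤ ‖z‖ + 1 := by
        have := norm_sub_le z' z
        have hd : ‖z' - z‖ < 1 := by rwa [Metric.mem_ball, dist_eq_norm] at hz'
        have h3 : ‖z'‖ - ‖z‖ ≤ ‖z' - z‖ := by
          have := norm_sub_norm_le z' z
          linarith
        linarith
      linarith
    calc ‖gradK d t (z' - y)‖ ≤ 1 / (2 * t) * c * ‖z' - y‖ := norm_gradK_le ht _
      _ ≤ 1 / (2 * t) * c * (‖z‖ + 1 + R) := by
          apply mul_le_mul_of_nonneg_left hz'n (by positivity)
  · exact integrable_const _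
  · exact Filter.Eventually.of_forall fun y z' _ => shift_hasFDerivAt ht y z'

lemma gradKApply_hasFDerivAt_integral {R t : ℝ} (hR : 0 < R) (ht : 0 < t)
    {μ : Measure E} [IsProbabilityMeasure μ]
    (hsupp : ∀ᵐ y ∂μ, y ∈ Metric.closedBall (0 : E) R) (i : Fin d) (z : E) :
    HasFDerivAt (fun z : E => ∫ y, gradK d t (z - y) (EuclideanSpace.single i (1 : ℝ)) ∂μ)
      (∫ y, hessK d t i (z - y) ∂μ) z := by
  set c := (4 * π * t) ^ (-(d : ℝ) / 2) with hc
  have hcpos : 0 < c := by rw [hc]; positivity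
  refine hasFDerivAt_integral_of_dominated_of_fderiv_le
    (F' := fun z y => hessK d t i (z - y))
    (bound := fun _ => 1 / (2 * t) * c + 1 / (4 * t ^ 2) * c * (‖z‖ + 1 + R) ^ 2)
    (Metric.ball_mem_nhds z one_pos) ?_ ?_ ?_ ?_ ?_ ?_
  · refine Filter.Eventually.of_forall fun z' => ?_
    exact ((continuous_gradK t z').clm_apply continuous_const).aestronglyMeasurable
  · refine integrable_of_ball_bound hsupp
      ((continuous_gradK t z).clm_apply continuous_const).aestronglyMeasurable
      (M := 1 / (2 * t) * c * (‖z‖ + R)) fun y hy => ?_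
    have hyR : ‖y‖ ≤ R := by rwa [Metric.mem_closedBall, dist_zero_right] at hy
    have hsingle : ‖EuclideanSpace.single i (1 : ℝ)‖ = 1 := by
      rw [EuclideanSpace.norm_single, norm_one]
    calc ‖gradK d t (z - y) (EuclideanSpace.single i (1 : ℝ))‖
        ≤ ‖gradK d t (z - y)‖ * ‖EuclideanSpace.single i (1 : ℝ)‖ :=
          ContinuousLinearMap.le_opNorm _ _
      _ = ‖gradK d t (z - y)‖ := by rw [hsingle, mul_one]
      _ ≤ 1 / (2 * t) * c * ‖z - y‖ := norm_gradK_le ht _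
      _ ≤ 1 / (2 * t) * c * (‖z‖ + R) := by
          apply mul_le_mul_of_nonneg_left _ (by positivity)
          exact le_trans (norm_sub_le _ _) (by linarith)
  · exact (continuous_hessK t i z).aestronglyMeasurable
  · refine hsupp.mono fun y hy z' hz' => ?_
    have hyR : ‖y‖ ≤ R := by rwa [Metric.mem_closedBall, dist_zero_right] at hy
    have hz'n : ‖z' - y‖ ≤ ‖z‖ + 1 + R := by
      have h1 : ‖z' - y‖ ≤ ‖z'‖ + ‖y‖ := norm_sub_le _ _
      have hd : ‖z' - z‖ < 1 := by rwa [Metric.mem_ball, dist_eq_norm] at hz'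
      have h3 : ‖z'‖ - ‖z‖ ≤ ‖z' - z‖ := norm_sub_norm_le z' z
      linarith
    calc ‖hessK d t i (z' - y)‖
        ≤ 1 / (2 * t) * c + 1 / (4 * t ^ 2) * c * ‖z' - y‖ ^ 2 := norm_hessK_le ht i _
      _ ≤ 1 / (2 * t) * c + 1 / (4 * t ^ 2) * c * (‖z‖ + 1 + R) ^ 2 := by
          have hp : ‖z' - y‖ ^ 2 ≤ (‖z‖ + 1 + R) ^ 2 :=
            pow_le_pow_left₀ (norm_nonneg _) hz'n 2
          have := mul_le_mul_of_nonneg_left hp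
            (show (0:ℝ) ≤ 1 / (4 * t ^ 2) * c by positivity)
          linarith [this]
  · exact integrable_const _
  · exact Filter.Eventually.of_forall fun y z' _ => gradK_apply_hasFDerivAt ht i y z'

lemma integrable_heatKernel_shift {R t : ℝ} (ht : 0 < t) {μ : Measure E}
    [IsProbabilityMeasure μ] (hsupp : ∀ᵐ y ∂μ, y ∈ Metric.closedBall (0 : E) R) (z : E) :
    Integrable (fun y : E => heatKernel d t (z - y)) μ := by
  refine integrable_of_ball_bound hsupp
    ((continuous_heatKernel t).comp (by continuity)).aestronglyMeasurable
    (M := (4 * π * t) ^ (-(d : ℝ) / 2)) fun y _ => ?_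
  rw [Real.norm_eq_abs, abs_of_pos (heatKernel_pos ht _)]
  exact heatKernel_le ht _

lemma heatFlow_pos {R t : ℝ} (hR : 0 < R) (ht : 0 < t) {μ : Measure E}
    [IsProbabilityMeasure μ] (hsupp : ∀ᵐ y ∂μ, y ∈ Metric.closedBall (0 : E) R) (z : E) :
    0 < heatFlow d μ z t := by
  set m : ℝ := (4 * π * t) ^ (-(d : ℝ) / 2) * Real.exp (-(‖z‖ + R) ^ 2 / (4 * t)) with hm
  have hmpos : 0 < m := by rw [hm]; positivity
  have hlow : ∀ᵐ y ∂μ, m ≤ heatKernel d t (z - y) := by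
    refine hsupp.mono fun y hy => ?_
    have hyR : ‖y‖ ≤ R := by rwa [Metric.mem_closedBall, dist_zero_right] at hy
    have hn : ‖z - y‖ ≤ ‖z‖ + R := le_trans (norm_sub_le _ _) (by linarith)
    unfold heatKernel
    rw [hm]
    have h4 : (0:ℝ) < 4 * t := by linarith
    apply mul_le_mul_of_nonneg_left _ (by positivity)
    rw [exp_le_exp, div_le_div_iff_of_pos_right h4, neg_le_neg_iff]
    have h0 : (0:ℝ) ≤ ‖z - y‖ := norm_nonneg _
    nlinarith
  have := integral_mono_ae (integrable_const m) (integrable_heatKernel_shift ht hsupp z) hlow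
  rw [integral_const] at this
  simp only [measure_univ, ENNReal.toReal_one, probReal_univ, smul_eq_mul, one_mul] at this
  calc (0:ℝ) < m := hmpos
    _ ≤ _ := this

lemma tilted_integral {t : ℝ} (ht : 0 < t) {μ : Measure E} (x : E) (f : E → ℝ) :
    ∫ y, f y ∂(tilted d μ x t) =
      (heatFlow d μ x t)⁻¹ * ∫ y, heatKernel d t (x - y) * f y ∂μ := by
  unfold tilted
  have hmeas : Measurable fun y : E =>
      Real.toNNReal (heatKernel d t (x - y) / heatFlow d μ x t) := by
    apply Measurable.real_toNNReal
    exact (((continuous_heatKernel t).comp (by continuity)).div_const _).measurable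
  have hd : (fun y : E => ENNReal.ofReal (heatKernel d t (x - y) / heatFlow d μ x t)) =
      fun y : E => ((Real.toNNReal (heatKernel d t (x - y) / heatFlow d μ x t) : NNReal) : ENNReal) :=
    rfl
  rw [hd, integral_withDensity_eq_integral_smul hmeas]
  rw [← integral_const_mul]
  congr 1
  funext y
  have hu : 0 ≤ heatFlow d μ x t :=
    integral_nonneg fun y => (heatKernel_pos ht _).le
  rw [NNReal.smul_def, Real.coe_toNNReal _ (div_nonneg (heatKernel_pos ht _).le hu),
    smul_eq_mul]
  ring

lemma abs_coord_le_norm (i : Fin d) (y : E) : |y i| ≤ ‖y‖ := by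
  have h := abs_real_inner_le_norm (EuclideanSpace.single i (1 : ℝ)) y
  rw [EuclideanSpace.inner_single_left] at h
  simpa [EuclideanSpace.norm_single] using h

lemma continuous_coord (i : Fin d) : Continuous fun y : E => y i :=
  (EuclideanSpace.proj (𝕜 := ℝ) i).continuous

lemma integral_comb4 {μ : Measure E} {f1 f2 f3 f4 : E → ℝ} (h1 : Integrable f1 μ)
    (h2 : Integrable f2 μ) (h3 : Integrable f3 μ) (h4 : Integrable f4 μ)
    (a1 a2 a3 a4 : ℝ) :
    ∫ y, (a1 * f1 y + a2 * f2 y + a3 * f3 y + a4 * f4 y) ∂μ =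
      a1 * ∫ y, f1 y ∂μ + a2 * ∫ y, f2 y ∂μ + a3 * ∫ y, f3 y ∂μ + a4 * ∫ y, f4 y ∂μ := by
  calc ∫ y, (a1 * f1 y + a2 * f2 y + a3 * f3 y + a4 * f4 y) ∂μ
      = (∫ y, (a1 * f1 y + a2 * f2 y + a3 * f3 y) ∂μ) + ∫ y, a4 * f4 y ∂μ :=
        integral_add (((h1.const_mul a1).add (h2.const_mul a2)).add (h3.const_mul a3))
          (h4.const_mul a4)
    _ = ((∫ y, (a1 * f1 y + a2 * f2 y) ∂μ) + ∫ y, a3 * f3 y ∂μ) + ∫ y, a4 * f4 y ∂μ := by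
        have := integral_add ((h1.const_mul a1).add (h2.const_mul a2)) (h3.const_mul a3)
        rw [show (∫ y, (a1 * f1 y + a2 * f2 y + a3 * f3 y) ∂μ) =
          (∫ y, (a1 * f1 y + a2 * f2 y) ∂μ) + ∫ y, a3 * f3 y ∂μ from this]
    _ = ((a1 * ∫ y, f1 y ∂μ + a2 * ∫ y, f2 y ∂μ) + ∫ y, a3 * f3 y ∂μ) + ∫ y, a4 * f4 y ∂μ := by
        have := integral_add (h1.const_mul a1) (h2.const_mul a2)
        rw [show (∫ y, (a1 * f1 y + a2 * f2 y) ∂μ) =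
          (∫ y, a1 * f1 y ∂μ) + ∫ y, a2 * f2 y ∂μ from this, integral_const_mul, integral_const_mul]
    _ = _ := by
        rw [integral_const_mul, integral_const_mul]
lemma integral_comb2 {μ : Measure E} {f1 f2 : E → ℝ} (h1 : Integrable f1 μ)
    (h2 : Integrable f2 μ) (a1 a2 : ℝ) :
    ∫ y, (a1 * f1 y + a2 * f2 y) ∂μ = a1 * ∫ y, f1 y ∂μ + a2 * ∫ y, f2 y ∂μ := by
  rw [integral_add (h1.const_mul a1) (h2.const_mul a2), integral_const_mul, integral_const_mul]

/-- Covariance representation of the log-Hessian: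
`Hess(log u(x,t)) = -(1/(2t)) I_d + (1/(4t²)) Cov(Y_x)`, entrywise. -/
theorem log_hessian_covariance_representation (d : ℕ) (R : ℝ) (hR : 0 < R)
    (μ : Measure (EuclideanSpace ℝ (Fin d))) [IsProbabilityMeasure μ]
    (hsupp : ∀ᵐ y ∂μ, y ∈ Metric.closedBall (0 : EuclideanSpace ℝ (Fin d)) R)
    (x : EuclideanSpace ℝ (Fin d)) (t : ℝ) (ht : 0 < t) (i j : Fin d) :
    hessEntry d (fun z => Real.log (heatFlow d μ z t)) x i j =
      -(1 / (2 * t)) * (if i = j then (1 : ℝ) else 0) +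
        (1 / (4 * t ^ 2)) *
          ((∫ y, y i * y j ∂(tilted d μ x t)) -
            (∫ y, y i ∂(tilted d μ x t)) * (∫ y, y j ∂(tilted d μ x t))) := by
  classical
  set c : ℝ := (4 * π * t) ^ (-(d : ℝ) / 2) with hc
  have hcpos : 0 < c := by rw [hc]; positivity
  have hR0 : (0:ℝ) ≤ R := hR.le
  have hu_pos : ∀ z : EuclideanSpace ℝ (Fin d), 0 < heatFlow d μ z t :=
    fun z => heatFlow_pos hR ht hsupp z
  have hgradK_int : ∀ z : EuclideanSpace ℝ (Fin d),
      Integrable (fun y => gradK d t (z - y)) μ := by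
    intro z
    refine integrable_of_ball_bound hsupp (continuous_gradK t z).aestronglyMeasurable
      (M := 1 / (2 * t) * c * (‖z‖ + R)) fun y hy => ?_
    have hyR : ‖y‖ ≤ R := by rwa [Metric.mem_closedBall, dist_zero_right] at hy
    calc ‖gradK d t (z - y)‖ ≤ 1 / (2 * t) * c * ‖z - y‖ := norm_gradK_le ht _
      _ ≤ 1 / (2 * t) * c * (‖z‖ + R) := by
          apply mul_le_mul_of_nonneg_left _ (by positivity)
          exact le_trans (norm_sub_le _ _) (by linarith)
  have hhessK_int : Integrable (fun y => hessK d t i (x - y)) μ := by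
    refine integrable_of_ball_bound hsupp (continuous_hessK t i x).aestronglyMeasurable
      (M := 1 / (2 * t) * c + 1 / (4 * t ^ 2) * c * (‖x‖ + R) ^ 2) fun y hy => ?_
    have hyR : ‖y‖ ≤ R := by rwa [Metric.mem_closedBall, dist_zero_right] at hy
    have hn : ‖x - y‖ ≤ ‖x‖ + R := le_trans (norm_sub_le _ _) (by linarith)
    calc ‖hessK d t i (x - y)‖ ≤ 1 / (2 * t) * c + 1 / (4 * t ^ 2) * c * ‖x - y‖ ^ 2 :=
        norm_hessK_le ht i _
      _ ≤ _ := by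
          have hp : ‖x - y‖ ^ 2 ≤ (‖x‖ + R) ^ 2 := pow_le_pow_left₀ (norm_nonneg _) hn 2
          have := mul_le_mul_of_nonneg_left hp
            (show (0:ℝ) ≤ 1 / (4 * t ^ 2) * c by positivity)
          linarith
  have hg_int : Integrable (fun y => heatKernel d t (x - y)) μ :=
    integrable_heatKernel_shift ht hsupp x
  have hKb : ∀ y : EuclideanSpace ℝ (Fin d), ‖heatKernel d t (x - y)‖ ≤ c := fun y => by
    rw [Real.norm_eq_abs, abs_of_pos (heatKernel_pos ht _)]
    exact heatKernel_le ht _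
  have hgi_int : ∀ k : Fin d, Integrable (fun y => heatKernel d t (x - y) * y k) μ := by
    intro k
    refine integrable_of_ball_bound hsupp
      ((((continuous_heatKernel (d := d) t).comp (by continuity)).mul
        (continuous_coord k))).aestronglyMeasurable
      (M := c * R) fun y hy => ?_
    have hyR : ‖y‖ ≤ R := by rwa [Metric.mem_closedBall, dist_zero_right] at hy
    rw [norm_mul]
    have h1 : ‖y k‖ ≤ R :=
      le_trans (by rw [Real.norm_eq_abs]; exact abs_coord_le_norm k y) hyR
    exact mul_le_mul (hKb y) h1 (norm_nonneg _) hcpos.le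
  have hgij_int : Integrable (fun y => heatKernel d t (x - y) * (y i * y j)) μ := by
    refine integrable_of_ball_bound hsupp
      ((((continuous_heatKernel (d := d) t).comp (by continuity)).mul
        ((continuous_coord i).mul (continuous_coord j)))).aestronglyMeasurable
      (M := c * (R * R)) fun y hy => ?_
    have hyR : ‖y‖ ≤ R := by rwa [Metric.mem_closedBall, dist_zero_right] at hy
    rw [norm_mul, norm_mul]
    have h1 : ‖y i‖ ≤ R :=
      le_trans (by rw [Real.norm_eq_abs]; exact abs_coord_le_norm i y) hyR
    have h2 : ‖y j‖ ≤ R :=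
      le_trans (by rw [Real.norm_eq_abs]; exact abs_coord_le_norm j y) hyR
    exact mul_le_mul (hKb y) (mul_le_mul h1 h2 (norm_nonneg _) hR0) (by positivity) hcpos.le
  -- derivatives
  have hu' : ∀ z : EuclideanSpace ℝ (Fin d), HasFDerivAt (fun z => heatFlow d μ z t)
      (∫ y, gradK d t (z - y) ∂μ) z := fun z => heatFlow_hasFDerivAt hR ht hsupp z
  have hlog : ∀ z : EuclideanSpace ℝ (Fin d),
      HasFDerivAt (fun z => Real.log (heatFlow d μ z t))
      ((heatFlow d μ z t)⁻¹ • ∫ y, gradK d t (z - y) ∂μ) z :=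
    fun z => (hu' z).log (hu_pos z).ne'
  have hfd : (fun z => fderiv ℝ (fun z => Real.log (heatFlow d μ z t)) z
      (EuclideanSpace.single i (1 : ℝ))) =
      fun z => (heatFlow d μ z t)⁻¹ *
        ∫ y, gradK d t (z - y) (EuclideanSpace.single i (1 : ℝ)) ∂μ := by
    funext z
    rw [(hlog z).fderiv]
    rw [ContinuousLinearMap.coe_smul', Pi.smul_apply, smul_eq_mul,
      ContinuousLinearMap.integral_apply (hgradK_int z)]
  have hA : HasFDerivAt (fun z => ∫ y, gradK d t (z - y)
      (EuclideanSpace.single i (1 : ℝ)) ∂μ) (∫ y, hessK d t i (x - y) ∂μ) x :=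
    gradKApply_hasFDerivAt_integral hR ht hsupp i x
  have hinv : HasFDerivAt (fun z => (heatFlow d μ z t)⁻¹)
      ((-(heatFlow d μ x t ^ 2)⁻¹) • ∫ y, gradK d t (x - y) ∂μ) x := by
    exact (hasDerivAt_inv (hu_pos x).ne').comp_hasFDerivAt x (hu' x)
  have hfderiv2 : fderiv ℝ (fun z => (heatFlow d μ z t)⁻¹ *
      ∫ y, gradK d t (z - y) (EuclideanSpace.single i (1 : ℝ)) ∂μ) x =
      (heatFlow d μ x t)⁻¹ • (∫ y, hessK d t i (x - y) ∂μ) +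
        (∫ y, gradK d t (x - y) (EuclideanSpace.single i (1 : ℝ)) ∂μ) •
          ((-(heatFlow d μ x t ^ 2)⁻¹) • ∫ y, gradK d t (x - y) ∂μ) := by
    exact HasFDerivAt.fderiv (hinv.mul hA)
  unfold hessEntry
  rw [hfd, hfderiv2]
  simp only [ContinuousLinearMap.add_apply, ContinuousLinearMap.coe_smul', Pi.smul_apply,
    smul_eq_mul]
  rw [ContinuousLinearMap.integral_apply hhessK_int,
    ContinuousLinearMap.integral_apply (hgradK_int x)]
  -- scalar integral computations
  have hsub : ∀ (y : EuclideanSpace ℝ (Fin d)) (k : Fin d), (x - y) k = x k - y k :=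
    fun y k => rfl
  have hSk : ∀ k : Fin d, ∫ y, gradK d t (x - y) (EuclideanSpace.single k (1 : ℝ)) ∂μ =
      (-(1 / (2 * t)) * x k) * heatFlow d μ x t +
        (1 / (2 * t)) * ∫ y, heatKernel d t (x - y) * y k ∂μ := by
    intro k
    have e : (fun y : EuclideanSpace ℝ (Fin d) =>
        gradK d t (x - y) (EuclideanSpace.single k (1 : ℝ))) =
        fun y => (-(1 / (2 * t)) * x k) * heatKernel d t (x - y) +
          (1 / (2 * t)) * (heatKernel d t (x - y) * y k) := by
      funext y
      simp only [gradK, ContinuousLinearMap.coe_smul', Pi.smul_apply, smul_eq_mul,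
        innerSL_apply_apply, EuclideanSpace.inner_single_right, RCLike.star_def, conj_trivial,
        hsub y k]
      ring
    rw [e, integral_comb2 hg_int (hgi_int k)]
    rfl
  have hS2 : ∫ y, hessK d t i (x - y) (EuclideanSpace.single j (1 : ℝ)) ∂μ =
      (-(1 / (2 * t)) * (if i = j then (1:ℝ) else 0) + (1 / (4 * t ^ 2)) * (x i * x j)) *
          heatFlow d μ x t +
        (-(1 / (4 * t ^ 2)) * x j) * (∫ y, heatKernel d t (x - y) * y i ∂μ) +
        (-(1 / (4 * t ^ 2)) * x i) * (∫ y, heatKernel d t (x - y) * y j ∂μ) +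
        (1 / (4 * t ^ 2)) * ∫ y, heatKernel d t (x - y) * (y i * y j) ∂μ := by
    have e : (fun y : EuclideanSpace ℝ (Fin d) =>
        hessK d t i (x - y) (EuclideanSpace.single j (1 : ℝ))) =
        fun y => (-(1 / (2 * t)) * (if i = j then (1:ℝ) else 0) +
            (1 / (4 * t ^ 2)) * (x i * x j)) * heatKernel d t (x - y) +
          (-(1 / (4 * t ^ 2)) * x j) * (heatKernel d t (x - y) * y i) +
          (-(1 / (4 * t ^ 2)) * x i) * (heatKernel d t (x - y) * y j) +
          (1 / (4 * t ^ 2)) * (heatKernel d t (x - y) * (y i * y j)) := by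
      funext y
      simp only [hessK, ContinuousLinearMap.add_apply, ContinuousLinearMap.coe_smul',
        Pi.smul_apply, smul_eq_mul, innerSL_apply_apply, EuclideanSpace.inner_single_right,
        EuclideanSpace.inner_single_left, RCLike.star_def, conj_trivial,
        EuclideanSpace.single_apply, hsub y i, hsub y j]
      by_cases h : i = j
      · subst h
        simp only [if_pos rfl]
        ring
      · rw [if_neg h, if_neg (fun hji => h hji.symm)]
        ring
    rw [e, integral_comb4 hg_int (hgi_int i) (hgi_int j) hgij_int]
    rfl
  -- tilted integrals
  have hTi : ∫ y, y i ∂(tilted d μ x t) =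
      (heatFlow d μ x t)⁻¹ * ∫ y, heatKernel d t (x - y) * y i ∂μ :=
    tilted_integral ht x _
  have hTj : ∫ y, y j ∂(tilted d μ x t) =
      (heatFlow d μ x t)⁻¹ * ∫ y, heatKernel d t (x - y) * y j ∂μ :=
    tilted_integral ht x _
  have hTij : ∫ y, y i * y j ∂(tilted d μ x t) =
      (heatFlow d μ x t)⁻¹ * ∫ y, heatKernel d t (x - y) * (y i * y j) ∂μ :=
    tilted_integral ht x _
  rw [hS2, hSk i, hSk j, hTi, hTj, hTij]
  have hu0 : heatFlow d μ x t ≠ 0 := (hu_pos x).ne'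
  have ht0 : t ≠ 0 := ht.ne'
  by_cases hij : i = j
  · simp only [if_pos hij]
    field_simp
    ring
  · simp only [if_neg hij]
    field_simp
    ring
end
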